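/- arXiv:1808.02955 — 6 statements merged into one kernel-verified Lean document; each statement's English description precedes it below -/
import Mathlib

section
/- Let p be a prime and let k be an integer with 1 ≤ k ≤ p−1. If A and B are two root sets of type (k,p) (i.e. sets of k distinct complex roots of x^p = (−1)^{k+1}) such that the sum of the elements of A equals the sum of the elements of B, then A = B. In particular, the complex numbers p·(ζ₁+…+ζ_k), as {ζ₁,…,ζ_k} ranges over all root sets of type (k,p), are pairwise distinct. -/
/-!
Fix `w` with `w ^ p = (-1) ^ (k + 1)` and a primitive `p`-th root of unity `ζ`; a root set is then
`{ζ ^ i * w | i ∈ S}` for a `k`-element set `S ⊆ {0, …, p - 1}`. If two such sets `S`, `T` give the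
same sum, the rational polynomial `∑ (𝟙_S - 𝟙_T)(i) X ^ i` vanishes at `ζ`, so it is a multiple of
the minimal polynomial `Φ_p = 1 + X + ⋯ + X ^ (p - 1)` of degree `p - 1`. Hence all its coefficients
are equal, and since they sum to `#S - #T = 0` they vanish, i.e. `S = T`.
-/

/-- A root set of type `(k,n)`: a set of `k` distinct complex numbers
each satisfying `ζ^n = (-1)^(k+1)`. -/
def IsRootSet (k n : ℕ) (I : Finset ℂ) : Prop :=
  I.card = k ∧ ∀ z ∈ I, z ^ n = (-1 : ℂ) ^ (k + 1)

open Polynomial Finset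

namespace IsPrimitiveRoot

theorem mem_image_range_pow_mul_of_pow_eq {R : Type*} [CommRing R] [IsDomain R] [DecidableEq R]
    {n : ℕ} [NeZero n] {ζ : R} (hζ : IsPrimitiveRoot ζ n) {w z : R} (hz : z ^ n = w ^ n) :
    z ∈ (range n).image (ζ ^ · * w) := by
  have hz' : z ∈ nthRoots n (w ^ n) := (mem_nthRoots (NeZero.pos n)).mpr hz
  rw [hζ.nthRoots_eq rfl, Multiset.mem_map] at hz'
  obtain ⟨i, hi, rfl⟩ := hz'
  exact mem_image_of_mem _ (mem_range.mpr (Multiset.mem_range.mp hi))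

variable {K : Type*} [Field K] [CharZero K] {p : ℕ} [Fact p.Prime] {ζ : K}

theorem exists_forall_eq_of_sum_mul_pow_eq_zero (hζ : IsPrimitiveRoot ζ p) {c : ℕ → ℚ}
    (h : ∑ i ∈ range p, (c i : K) * ζ ^ i = 0) : ∃ a, ∀ i < p, c i = a := by
  have hp := (Fact.out : p.Prime)
  set P : ℚ[X] := ∑ i ∈ range p, C (c i) * X ^ i
  have hcoeff : ∀ i < p, P.coeff i = c i := fun i hi => by
    simp [P, coeff_C_mul, coeff_X_pow, hi]
  have hdvd : cyclotomic p ℚ ∣ P := by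
    rw [cyclotomic_eq_minpoly_rat hζ hp.pos]
    exact minpoly.dvd ℚ ζ (by simpa [P] using h)
  have hdeg : P.natDegree ≤ (cyclotomic p ℚ).natDegree := by
    rw [natDegree_cyclotomic, Nat.totient_prime hp]
    refine natDegree_sum_le_of_forall_le _ _ fun i hi => (natDegree_C_mul_le _ _).trans ?_
    rw [natDegree_X_pow]
    exact Nat.le_pred_of_lt (mem_range.mp hi)
  obtain ⟨a, hP⟩ : ∃ a, P = C a * cyclotomic p ℚ :=
    ⟨_, eq_leadingCoeff_mul_of_monic_of_dvd_of_natDegree_le (cyclotomic.monic p ℚ) hdvd hdeg⟩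
  refine ⟨a, fun i hi => ?_⟩
  rw [← hcoeff i hi, hP, coeff_C_mul, cyclotomic_prime, finsetSum_coeff]
  simp [coeff_X_pow, hi]

theorem finset_eq_of_sum_pow_eq (hζ : IsPrimitiveRoot ζ p) {S T : Finset ℕ}
    (hS : S ⊆ range p) (hT : T ⊆ range p) (hcard : #S = #T)
    (hsum : ∑ i ∈ S, ζ ^ i = ∑ i ∈ T, ζ ^ i) : S = T := by
  set c : ℕ → ℚ := fun i => (if i ∈ S then 1 else 0) - (if i ∈ T then 1 else 0)
  have hrel : ∑ i ∈ range p, (c i : K) * ζ ^ i = 0 := by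
    simp only [c, Rat.cast_sub, sub_mul, sum_sub_distrib, apply_ite Rat.cast, ite_mul,
      Rat.cast_one, Rat.cast_zero, one_mul, zero_mul, sum_ite_mem, inter_eq_right.mpr hS,
      inter_eq_right.mpr hT, hsum, sub_self]
  obtain ⟨a, ha⟩ := hζ.exists_forall_eq_of_sum_mul_pow_eq_zero hrel
  have hc_sum : ∑ i ∈ range p, c i = 0 := by
    simp [c, sum_sub_distrib, sum_ite_mem, inter_eq_right.mpr hS, inter_eq_right.mpr hT, hcard]
  have ha0 : a = 0 := by
    rw [sum_congr rfl fun i hi => ha i (mem_range.mp hi), sum_const, card_range,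
      nsmul_eq_mul] at hc_sum
    exact (mul_eq_zero.mp hc_sum).resolve_left (Nat.cast_ne_zero.mpr (Fact.out : p.Prime).ne_zero)
  ext i
  by_cases hi : i < p
  · have := ha i hi
    simp only [c, ha0] at this
    split_ifs at this <;> simp_all
  · have hi' : i ∉ range p := by simpa using hi
    exact iff_of_false (fun h => hi' (hS h)) (fun h => hi' (hT h))

theorem finset_eq_of_pow_eq_of_sum_eq (hζ : IsPrimitiveRoot ζ p) {w : K} (hw : w ≠ 0)
    {A B : Finset K} (hA : ∀ z ∈ A, z ^ p = w ^ p) (hB : ∀ z ∈ B, z ^ p = w ^ p)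
    (hcard : #A = #B) (hsum : ∑ z ∈ A, z = ∑ z ∈ B, z) : A = B := by
  classical
  have hinj : Set.InjOn (ζ ^ · * w) (range p) := fun i hi j hj hij =>
    hζ.pow_inj (mem_range.mp hi) (mem_range.mp hj) (mul_right_cancel₀ hw hij)
  obtain ⟨S, hS, rfl⟩ := subset_image_iff.mp fun z hz =>
    hζ.mem_image_range_pow_mul_of_pow_eq (hA z hz)
  obtain ⟨T, hT, rfl⟩ := subset_image_iff.mp fun z hz =>
    hζ.mem_image_range_pow_mul_of_pow_eq (hB z hz)
  rw [card_image_of_injOn (hinj.mono hS), card_image_of_injOn (hinj.mono hT)] at hcard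
  rw [sum_image (hinj.mono hS), sum_image (hinj.mono hT), ← sum_mul, ← sum_mul] at hsum
  rw [hζ.finset_eq_of_sum_pow_eq hS hT hcard (mul_right_cancel₀ hw hsum)]

end IsPrimitiveRoot

theorem rootSet_sum_injective_of_prime_general (p k : ℕ) (hp : Nat.Prime p)
    (A B : Finset ℂ) (hA : IsRootSet k p A) (hB : IsRootSet k p B)
    (hsum : ∑ z ∈ A, z = ∑ z ∈ B, z) :
    A = B := by
  have := Fact.mk hp
  obtain ⟨w, hw⟩ := IsAlgClosed.exists_pow_nat_eq ((-1 : ℂ) ^ (k + 1)) hp.pos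
  have hw0 : w ≠ 0 := by
    rintro rfl
    exact pow_ne_zero _ (neg_ne_zero.mpr one_ne_zero) (hw.symm.trans (zero_pow hp.ne_zero))
  exact (Complex.isPrimitiveRoot_exp p hp.ne_zero).finset_eq_of_pow_eq_of_sum_eq hw0
    (fun z hz => hw ▸ hA.2 z hz) (fun z hz => hw ▸ hB.2 z hz) (hA.1.trans hB.1.symm) hsum

/-- If `p` is prime, two root sets of type `(k,p)` with the same element sum coincide;
in particular the numbers `p·(ζ₁+…+ζ_k)` over all root sets of type `(k,p)` are
pairwise distinct. -/
theorem rootSet_sum_injective_of_prime (p k : ℕ) (hp : Nat.Prime p)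
    (hk1 : 1 ≤ k) (hk2 : k ≤ p - 1)
    (A B : Finset ℂ) (hA : IsRootSet k p A) (hB : IsRootSet k p B)
    (hsum : ∑ z ∈ A, z = ∑ z ∈ B, z) :
    A = B :=
  rootSet_sum_injective_of_prime_general p k hp A B hA hB hsum
end

section
/- Fix integers n ≥ 2 and 1 ≤ k ≤ n−1. Let p_{a,b} be nonzero complex numbers for 0 ≤ a ≤ k and 0 ≤ b ≤ n−k, with the convention p_{a,0} = p_{0,b} = 1 for all a,b. Define x_{i,j} = p_{k+1−i, j} / p_{k−i, j−1} for 1 ≤ i ≤ k and 1 ≤ j ≤ n−k. Then the following identity of complex numbers holds: Σ_{i=1}^{k−1} Σ_{j=1}^{n−k} x_{i,j}/x_{i+1,j} + Σ_{i=1}^{k} Σ_{j=1}^{n−k−1} x_{i,j+1}/x_{i,j} + 1/x_{1,n−k} + x_{k,1} = p_{1,1} + Σ_{a=2}^{k} Σ_{b=1}^{n−k} (p_{a,b}·p_{a−2,b−1})/(p_{a−1,b−1}·p_{a−1,b}) + p_{k−1,n−k−1}/p_{k,n−k} + Σ_{a=1}^{k} Σ_{b=2}^{n−k} (p_{a,b}·p_{a−1,b−2})/(p_{a−1,b−1}·p_{a,b−1}).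 -/
/-!
With `a = k + 1 - i`, each quotient of neighbouring holonomy variables is a quotient of four
Plücker coordinates: `x_{i,j} / x_{i+1,j}` is the summand of the first Marsh–Rietsch double
sum at `(a, j)`, and `x_{i,j+1} / x_{i,j}` that of the second at `(a, j + 1)`. Reflecting the
row index and shifting the column index therefore matches the double sums, and the two
remaining terms agree because `x_{1,n-k} = p_{k,n-k} / p_{k-1,n-k-1}` and
`x_{k,1} = p_{1,1} / p_{0,0} = p_{1,1}`.
-/

open Finset

namespace Finset

variable {M : Type*} [CommMonoid M]

@[to_additive]
theorem prod_Icc_add' {α : Type*} [AddCommMonoid α] [PartialOrder α] [IsOrderedCancelAddMonoid α]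
    [ExistsAddOfLE α] [LocallyFiniteOrder α] (f : α → M) (a b c : α) :
    ∏ i ∈ Icc a b, f (i + c) = ∏ i ∈ Icc (a + c) (b + c), f i := by
  rw [← map_add_right_Icc, prod_map]
  rfl

@[to_additive]
theorem prod_Icc_reflect (f : ℕ → M) {a b c : ℕ} (ha : a ≤ c) (hb : b ≤ c) :
    ∏ i ∈ Icc a b, f (c - i) = ∏ i ∈ Icc (c - b) (c - a), f i := by
  refine prod_nbij' (c - ·) (c - ·) ?_ ?_ ?_ ?_ fun _ _ => rfl <;>
    intro i hi <;> simp only [mem_Icc] at hi ⊢ <;> omega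

end Finset

section Superpotential

variable {K : Type*} [Field K]

def rowStepTerm (p : ℕ → ℕ → K) (a b : ℕ) : K :=
  p a b * p (a - 2) (b - 1) / (p (a - 1) (b - 1) * p (a - 1) b)

def colStepTerm (p : ℕ → ℕ → K) (a b : ℕ) : K :=
  p a b * p (a - 1) (b - 2) / (p (a - 1) (b - 1) * p a (b - 1))

variable {k m : ℕ} {p x : ℕ → ℕ → K}

theorem div_succ_row_eq_rowStepTerm
    (hx : ∀ i j, 1 ≤ i → i ≤ k → 1 ≤ j → j ≤ m → x i j = p (k + 1 - i) j / p (k - i) (j - 1))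
    {i j : ℕ} (hi : 1 ≤ i) (hik : i < k) (hj : 1 ≤ j) (hjm : j ≤ m) :
    x i j / x (i + 1) j = rowStepTerm p (k + 1 - i) j := by
  rw [hx i j hi hik.le hj hjm, hx (i + 1) j (by omega) hik hj hjm, div_div_div_eq, rowStepTerm,
    show k + 1 - (i + 1) = k + 1 - i - 1 by omega, show k - i = k + 1 - i - 1 by omega,
    show k - (i + 1) = k + 1 - i - 2 by omega]

theorem succ_col_div_eq_colStepTerm
    (hx : ∀ i j, 1 ≤ i → i ≤ k → 1 ≤ j → j ≤ m → x i j = p (k + 1 - i) j / p (k - i) (j - 1))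
    {i j : ℕ} (hi : 1 ≤ i) (hik : i ≤ k) (hj : 1 ≤ j) (hjm : j < m) :
    x i (j + 1) / x i j = colStepTerm p (k + 1 - i) (j + 1) := by
  rw [hx i (j + 1) hi hik (by omega) hjm, hx i j hi hik hj hjm.le, div_div_div_eq, colStepTerm,
    show k - i = k + 1 - i - 1 by omega, Nat.add_sub_cancel, show j + 1 - 2 = j - 1 by omega]

theorem sum_div_succ_row_eq_sum_rowStepTerm
    (hx : ∀ i j, 1 ≤ i → i ≤ k → 1 ≤ j → j ≤ m → x i j = p (k + 1 - i) j / p (k - i) (j - 1))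
    (hk : 1 ≤ k) :
    ∑ i ∈ Icc 1 (k - 1), ∑ j ∈ Icc 1 m, x i j / x (i + 1) j
      = ∑ a ∈ Icc 2 k, ∑ b ∈ Icc 1 m, rowStepTerm p a b := calc
  _ = ∑ i ∈ Icc 1 (k - 1), ∑ b ∈ Icc 1 m, rowStepTerm p (k + 1 - i) b := by
    refine sum_congr rfl fun i hi => sum_congr rfl fun j hj => ?_
    rw [mem_Icc] at hi hj
    exact div_succ_row_eq_rowStepTerm hx hi.1 (by omega) hj.1 hj.2
  _ = ∑ a ∈ Icc 2 k, ∑ b ∈ Icc 1 m, rowStepTerm p a b := by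
    rw [sum_Icc_reflect (fun a => ∑ b ∈ Icc 1 m, rowStepTerm p a b) (by omega) (by omega),
      show k + 1 - (k - 1) = 2 by omega, Nat.add_sub_cancel]

theorem sum_succ_col_div_eq_sum_colStepTerm
    (hx : ∀ i j, 1 ≤ i → i ≤ k → 1 ≤ j → j ≤ m → x i j = p (k + 1 - i) j / p (k - i) (j - 1))
    (hm : 1 ≤ m) :
    ∑ i ∈ Icc 1 k, ∑ j ∈ Icc 1 (m - 1), x i (j + 1) / x i j
      = ∑ a ∈ Icc 1 k, ∑ b ∈ Icc 2 m, colStepTerm p a b := calc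
  _ = ∑ i ∈ Icc 1 k, ∑ j ∈ Icc 1 (m - 1), colStepTerm p (k + 1 - i) (j + 1) := by
    refine sum_congr rfl fun i hi => sum_congr rfl fun j hj => ?_
    rw [mem_Icc] at hi hj
    exact succ_col_div_eq_colStepTerm hx hi.1 hi.2 hj.1 (by omega)
  _ = ∑ i ∈ Icc 1 k, ∑ b ∈ Icc 2 m, colStepTerm p (k + 1 - i) b := by
    refine sum_congr rfl fun i _ => ?_
    rw [sum_Icc_add' (colStepTerm p (k + 1 - i)), Nat.sub_add_cancel hm]
  _ = ∑ a ∈ Icc 1 k, ∑ b ∈ Icc 2 m, colStepTerm p a b := by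
    rw [sum_Icc_reflect (fun a => ∑ b ∈ Icc 2 m, colStepTerm p a b) (by omega) (by omega),
      Nat.add_sub_cancel, Nat.add_sub_cancel_left]

end Superpotential

theorem disk_potential_eq_rectangular_superpotential_general
    (n k : ℕ) (hk1 : 1 ≤ k) (hk2 : k ≤ n - 1)
    (p : ℕ → ℕ → ℂ)
    (hrow0 : ∀ a, p a 0 = 1)
    (x : ℕ → ℕ → ℂ)
    (hx : ∀ i j, 1 ≤ i → i ≤ k → 1 ≤ j → j ≤ n - k →
      x i j = p (k + 1 - i) j / p (k - i) (j - 1)) :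
    (∑ i ∈ Finset.Icc 1 (k - 1), ∑ j ∈ Finset.Icc 1 (n - k), x i j / x (i + 1) j)
      + (∑ i ∈ Finset.Icc 1 k, ∑ j ∈ Finset.Icc 1 (n - k - 1), x i (j + 1) / x i j)
      + 1 / x 1 (n - k) + x k 1
    = p 1 1
      + (∑ a ∈ Finset.Icc 2 k, ∑ b ∈ Finset.Icc 1 (n - k),
          p a b * p (a - 2) (b - 1) / (p (a - 1) (b - 1) * p (a - 1) b))
      + p (k - 1) (n - k - 1) / p k (n - k)
      + (∑ a ∈ Finset.Icc 1 k, ∑ b ∈ Finset.Icc 2 (n - k),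
          p a b * p (a - 1) (b - 2) / (p (a - 1) (b - 1) * p a (b - 1))) := by
  have hm : 1 ≤ n - k := by omega
  have h_last_col : 1 / x 1 (n - k) = p (k - 1) (n - k - 1) / p k (n - k) := by
    rw [hx 1 (n - k) le_rfl hk1 hm le_rfl, Nat.add_sub_cancel, one_div_div]
  have h_last_row : x k 1 = p 1 1 := by
    rw [hx k 1 hk1 le_rfl le_rfl hm, Nat.add_sub_cancel_left, Nat.sub_self, hrow0, div_one]
  rw [sum_div_succ_row_eq_sum_rowStepTerm hx hk1, sum_succ_col_div_eq_sum_colStepTerm hx hm,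
    h_last_col, h_last_row]
  simp only [rowStepTerm, colStepTerm]
  ring

/-- The change-of-variables identity: under the substitution
`x_{i,j} = p_{k+1−i,j}/p_{k−i,j−1}`, the Maslov 2 disk potential of the
Gelfand–Cetlin torus agrees with the Marsh–Rietsch superpotential restricted to the
rectangular cluster chart. -/
theorem disk_potential_eq_rectangular_superpotential
    (n k : ℕ) (hn : 2 ≤ n) (hk1 : 1 ≤ k) (hk2 : k ≤ n - 1)
    (p : ℕ → ℕ → ℂ)
    (hp : ∀ a b, a ≤ k → b ≤ n - k → p a b ≠ 0)
    (hrow0 : ∀ a, p a 0 = 1) (hcol0 : ∀ b, p 0 b = 1)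
    (x : ℕ → ℕ → ℂ)
    (hx : ∀ i j, 1 ≤ i → i ≤ k → 1 ≤ j → j ≤ n - k →
      x i j = p (k + 1 - i) j / p (k - i) (j - 1)) :
    (∑ i ∈ Finset.Icc 1 (k - 1), ∑ j ∈ Finset.Icc 1 (n - k), x i j / x (i + 1) j)
      + (∑ i ∈ Finset.Icc 1 k, ∑ j ∈ Finset.Icc 1 (n - k - 1), x i (j + 1) / x i j)
      + 1 / x 1 (n - k) + x k 1
    = p 1 1
      + (∑ a ∈ Finset.Icc 2 k, ∑ b ∈ Finset.Icc 1 (n - k),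
          p a b * p (a - 2) (b - 1) / (p (a - 1) (b - 1) * p (a - 1) b))
      + p (k - 1) (n - k - 1) / p k (n - k)
      + (∑ a ∈ Finset.Icc 1 k, ∑ b ∈ Finset.Icc 2 (n - k),
          p a b * p (a - 1) (b - 2) / (p (a - 1) (b - 1) * p a (b - 1))) :=
  disk_potential_eq_rectangular_superpotential_general n k hk1 hk2 p hrow0 x hx
end

section
/- Let p be a prime and let k, i, j be integers with 1 ≤ i ≤ k ≤ p−1 and 1 ≤ j ≤ p−k. Then the number of semistandard Young tableaux of rectangular shape with j rows and i columns (i.e., of shape the partition (i^j)) with entries in {1,…,p−k} is not divisible by p. -/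
/-!
Deleting the entries equal to the largest letter `m` from a semistandard tableau of shape `λ`
with entries `< m + 1` leaves a semistandard tableau with entries `< m` whose shape `μ`
interlaces `λ` (`λ_{s+1} ≤ μ_s ≤ λ_s`), and this is a bijection. Summing over `μ` with the
hockey-stick identity and the multilinearity of the determinant, induction on `m` gives
`#SSYT(λ, m) = det (binom a_s r) = ∏_{x<y} (a_y - a_x) / ∏_{r<m} r!`
where `a_t = λ_{m-1-t} + t`.
For `λ = (i^j)` and `m = p - k ≥ 1`, every difference `a_y - a_x` lies in `[1, i + m - 1]` and
`i + m - 1 < p`, so `p` does not divide the numerator, nor therefore the count.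
-/

noncomputable section

/-- Cells of the Young diagram of `lam` (at most `m` rows). -/
def youngCells (m : ℕ) (lam : ℕ → ℕ) : Finset (ℕ × ℕ) :=
  (Finset.range m).biUnion fun r => (Finset.range (lam r)).image fun c => (r, c)

/-- A filling of the diagram with entries in `{1,…,m}` is a semistandard Young tableau if
rows are weakly increasing and columns are strictly increasing. -/
def IsSSYT {m : ℕ} {lam : ℕ → ℕ} (T : {p // p ∈ youngCells m lam} → Fin m) : Prop :=
  (∀ p q : {p // p ∈ youngCells m lam},
      (p : ℕ × ℕ).1 = (q : ℕ × ℕ).1 → (q : ℕ × ℕ).2 = (p : ℕ × ℕ).2 + 1 → T p ≤ T q) ∧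
  (∀ p q : {p // p ∈ youngCells m lam},
      (p : ℕ × ℕ).2 = (q : ℕ × ℕ).2 → (q : ℕ × ℕ).1 = (p : ℕ × ℕ).1 + 1 → T p < T q)

open Classical in
/-- The finite set of semistandard Young tableaux of shape `lam` with entries in `{1,…,m}`. -/
def ssytFinset (m : ℕ) (lam : ℕ → ℕ) : Finset ({p // p ∈ youngCells m lam} → Fin m) :=
  Finset.univ.filter IsSSYT

/-- The rectangular partition `(partSize^numParts)`: `numParts` parts equal to `partSize`. -/
def rectPart (numParts partSize : ℕ) : ℕ → ℕ := fun r => if r < numParts then partSize else 0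

open Finset Matrix

namespace Matrix

theorem det_eq_det_sub_of_col_zero_eq_one {R : Type*} [CommRing R] {m : ℕ}
    (M : Matrix (Fin (m + 1)) (Fin (m + 1)) R) (hM : ∀ s, M s 0 = 1) :
    M.det = (of fun s r : Fin m => M s.succ r.succ - M s.castSucc r.succ).det := by
  set B : Matrix (Fin (m + 1)) (Fin (m + 1)) R :=
    of fun s r => Fin.cases (M 0 r) (fun t => M t.succ r - M t.castSucc r) s
  have hMB : M.det = B.det :=
    det_eq_of_forall_row_eq_smul_add_pred (fun _ => 1) (fun r => rfl) fun t r => by simp [B]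
  rw [hMB, det_succ_column_zero, Fin.sum_univ_succ]
  simp only [B, of_apply, Fin.cases_zero, Fin.cases_succ, hM, sub_self, mul_zero, zero_mul,
    sum_const_zero, add_zero, mul_one, Fin.val_zero, pow_zero, one_mul, Fin.succAbove_zero]
  rfl

end Matrix

theorem sum_Ico_choose (r : ℕ) {u v : ℕ} (huv : u ≤ v) :
    ∑ x ∈ Ico u v, (x.choose r : ℤ) = v.choose (r + 1) - u.choose (r + 1) := by
  induction v, huv using Nat.le_induction with
  | base => simp
  | succ v huv ih =>
    rw [sum_Ico_succ_top huv, ih, Nat.choose_succ_succ']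
    push_cast
    ring

def chooseMatrix {m : ℕ} (a : Fin m → ℕ) : Matrix (Fin m) (Fin m) ℤ :=
  of fun s r => (a s).choose r

theorem det_chooseMatrix_mul_prod_factorial {m : ℕ} (a : Fin m → ℕ) :
    (chooseMatrix a).det * ∏ r : Fin m, ((r : ℕ).factorial : ℤ) =
      (vandermonde fun s => (a s : ℤ)).det := by
  rw [det_eval_matrixOfPolynomials_eq_det_vandermonde _ (fun r => descPochhammer ℤ r)
    (fun r => descPochhammer_natDegree ℤ r) (fun r => monic_descPochhammer ℤ r), mul_comm,
    ← det_mul_row]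
  congr 1
  ext s r
  simp [chooseMatrix, descPochhammer_eval_eq_descFactorial,
    Nat.descFactorial_eq_factorial_mul_choose]

theorem sum_det_chooseMatrix_Ico {m : ℕ} {a : Fin (m + 1) → ℕ} (ha : Monotone a) :
    ∑ d ∈ Fintype.piFinset (fun s : Fin m => Ico (a s.castSucc) (a s.succ)),
      (chooseMatrix d).det = (chooseMatrix a).det := by
  have hrows :=
    (detRowAlternating : (Fin m → ℤ) [⋀^Fin m]→ₗ[ℤ] ℤ).toMultilinearMap.map_sum_finset
      (fun _ x r => ((x.choose r : ℕ) : ℤ)) (fun s => Ico (a s.castSucc) (a s.succ))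
  refine hrows.symm.trans ?_
  rw [det_eq_det_sub_of_col_zero_eq_one _ fun s => by simp [chooseMatrix]]
  simp only [Finset.sum_fn]
  change det (of fun (s r : Fin m) =>
    ∑ x ∈ Ico (a s.castSucc) (a s.succ), ((x.choose r : ℕ) : ℤ)) = _
  congr 1
  ext s r
  simp [chooseMatrix, sum_Ico_choose _ (ha (Fin.castSucc_le_succ s))]

section Tableaux

variable {m : ℕ} {lam : ℕ → ℕ}

theorem mem_youngCells {q : ℕ × ℕ} : q ∈ youngCells m lam ↔ q.1 < m ∧ q.2 < lam q.1 := by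
  obtain ⟨r, c⟩ := q
  simp [youngCells]

theorem mem_ssytFinset {T : {q // q ∈ youngCells m lam} → Fin m} :
    T ∈ ssytFinset m lam ↔ IsSSYT T := by
  simp [ssytFinset]

-- Off the diagram the entry is read as `m`, above every genuine entry, so that the tableau
-- conditions can be checked cell by cell without case splits on the shape.
def youngEntry (T : {q // q ∈ youngCells m lam} → Fin m) (q : ℕ × ℕ) : ℕ :=
  if h : q ∈ youngCells m lam then T ⟨q, h⟩ else m

variable {T : {q // q ∈ youngCells m lam} → Fin m} {q : ℕ × ℕ}

theorem youngEntry_of_mem (h : q ∈ youngCells m lam) : youngEntry T q = T ⟨q, h⟩ := dif_pos h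

theorem youngEntry_of_notMem (h : q ∉ youngCells m lam) : youngEntry T q = m := dif_neg h

theorem youngEntry_le : youngEntry T q ≤ m := by
  unfold youngEntry
  split_ifs <;> omega

theorem youngEntry_lt_iff : youngEntry T q < m ↔ q ∈ youngCells m lam := by
  unfold youngEntry
  split_ifs with h <;> simp [h]

theorem youngEntry_injective :
    Function.Injective
      (youngEntry : ({q // q ∈ youngCells m lam} → Fin m) → ℕ × ℕ → ℕ) := by
  intro T T' h
  funext q
  have := congrFun h q.1
  rwa [youngEntry_of_mem q.2, youngEntry_of_mem q.2, Fin.val_inj] at this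

theorem isSSYT_iff_youngEntry : IsSSYT T ↔ ∀ r c, (r, c) ∈ youngCells m lam →
    youngEntry T (r, c) ≤ youngEntry T (r, c + 1) ∧
      youngEntry T (r, c) < youngEntry T (r + 1, c) := by
  constructor
  · intro hT r c h
    rw [youngEntry_of_mem h]
    constructor
    · by_cases h' : (r, c + 1) ∈ youngCells m lam
      · rw [youngEntry_of_mem h']
        exact hT.1 ⟨_, h⟩ ⟨_, h'⟩ rfl rfl
      · rw [youngEntry_of_notMem h']
        exact (T _).is_lt.le
    · by_cases h' : (r + 1, c) ∈ youngCells m lam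
      · rw [youngEntry_of_mem h']
        exact hT.2 ⟨_, h⟩ ⟨_, h'⟩ rfl rfl
      · rw [youngEntry_of_notMem h']
        exact (T _).is_lt
  · intro hT
    constructor
    · rintro ⟨⟨r, c⟩, h⟩ ⟨⟨r', c'⟩, h'⟩ rfl rfl
      have := (hT r c h).1
      rwa [youngEntry_of_mem h, youngEntry_of_mem h'] at this
    · rintro ⟨⟨r, c⟩, h⟩ ⟨⟨r', c'⟩, h'⟩ rfl rfl
      have := (hT r c h).2
      rwa [youngEntry_of_mem h, youngEntry_of_mem h'] at this

theorem IsSSYT.monotone_youngEntry_row (hT : IsSSYT T) (r : ℕ) :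
    Monotone fun c => youngEntry T (r, c) := by
  refine monotone_nat_of_le_succ fun c => ?_
  by_cases h : (r, c) ∈ youngCells m lam
  · exact ((isSSYT_iff_youngEntry.1 hT) r c h).1
  · have h' : (r, c + 1) ∉ youngCells m lam := by
      simp only [mem_youngCells] at h ⊢
      omega
    simp [youngEntry_of_notMem h, youngEntry_of_notMem h']

theorem IsSSYT.le_youngEntry (hlam : Antitone lam) (hT : IsSSYT T) :
    ∀ r c, (r, c) ∈ youngCells m lam → r ≤ youngEntry T (r, c)
  | 0, _, _ => Nat.zero_le _
  | r + 1, c, h => by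
    have h' : (r, c) ∈ youngCells m lam := by
      simp only [mem_youngCells] at h ⊢
      exact ⟨by omega, h.2.trans_le (hlam r.le_succ)⟩
    exact (hT.le_youngEntry hlam r c h').trans_lt ((isSSYT_iff_youngEntry.1 hT) r c h').2


def toShape (m : ℕ) (f : Fin m → ℕ) : ℕ → ℕ :=
  fun r => if h : r < m then f ⟨r, h⟩ else 0

def interlacing (m : ℕ) (lam : ℕ → ℕ) : Finset (Fin m → ℕ) :=
  Fintype.piFinset fun s => Icc (lam (s + 1)) (lam s)

theorem mem_youngCells_toShape {f : Fin m → ℕ} {r c : ℕ} :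
    (r, c) ∈ youngCells m (toShape m f) ↔ ∃ h : r < m, c < f ⟨r, h⟩ := by
  rw [mem_youngCells]
  constructor
  · rintro ⟨h, hc⟩
    exact ⟨h, by simpa [toShape, h] using hc⟩
  · rintro ⟨h, hc⟩
    exact ⟨h, by simpa [toShape, h] using hc⟩

theorem mem_interlacing {f : Fin m → ℕ} :
    f ∈ interlacing m lam ↔ ∀ s : Fin m, lam (s + 1) ≤ f s ∧ f s ≤ lam s := by
  simp [interlacing]

theorem antitone_toShape {f : Fin m → ℕ} (hf : f ∈ interlacing m lam) :
    Antitone (toShape m f) := by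
  rw [mem_interlacing] at hf
  refine antitone_nat_of_succ_le fun r => ?_
  unfold toShape
  split_ifs with h h'
  · exact (hf ⟨r + 1, h⟩).2.trans (hf ⟨r, h'⟩).1
  · omega
  · omega
  · omega


theorem youngCells_toShape_subset {f : Fin m → ℕ} (hf : f ∈ interlacing m lam) :
    youngCells m (toShape m f) ⊆ youngCells (m + 1) lam := by
  intro q hq
  obtain ⟨r, c⟩ := q
  obtain ⟨hr, hc⟩ := mem_youngCells_toShape.1 hq
  exact mem_youngCells.2 ⟨by omega, hc.trans_le ((mem_interlacing.1 hf) ⟨r, hr⟩).2⟩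

end Tableaux

section RemovingLargestEntries

variable {m : ℕ} {lam mu : ℕ → ℕ}
  {T : {q // q ∈ youngCells (m + 1) lam} → Fin (m + 1)}
  {S : {q // q ∈ youngCells m mu} → Fin m} {q : ℕ × ℕ}

theorem exists_le_youngEntry (T : {q // q ∈ youngCells (m + 1) lam} → Fin (m + 1)) (s : ℕ) :
    ∃ c, m ≤ youngEntry T (s, c) :=
  ⟨lam s, by rw [youngEntry_of_notMem (by simp [mem_youngCells])]; omega⟩

def shapeBelowLast (T : {q // q ∈ youngCells (m + 1) lam} → Fin (m + 1)) : Fin m → ℕ :=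
  fun s => Nat.find (exists_le_youngEntry T s)

theorem IsSSYT.lt_shapeBelowLast_iff (hT : IsSSYT T) {s : Fin m} {c : ℕ} :
    c < shapeBelowLast T s ↔ youngEntry T (s, c) < m := by
  simp only [shapeBelowLast, Nat.lt_find_iff, not_le]
  exact ⟨fun h => h c le_rfl, fun h c' hc' => (hT.monotone_youngEntry_row s hc').trans_lt h⟩

theorem IsSSYT.shapeBelowLast_mem_interlacing (hlam : Antitone lam) (hT : IsSSYT T) :
    shapeBelowLast T ∈ interlacing m lam := by
  refine mem_interlacing.2 fun s => ⟨le_of_forall_lt fun c hc => ?_, Nat.find_min' _ ?_⟩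
  · have hmem : ((s : ℕ), c) ∈ youngCells (m + 1) lam :=
      mem_youngCells.2 ⟨by omega, hc.trans_le (hlam (Nat.le_succ _))⟩
    have hmem' : ((s : ℕ) + 1, c) ∈ youngCells (m + 1) lam :=
      mem_youngCells.2 ⟨by omega, hc⟩
    have hcol := ((isSSYT_iff_youngEntry.1 hT) _ _ hmem).2
    have hlt := (youngEntry_lt_iff (T := T)).2 hmem'
    rw [hT.lt_shapeBelowLast_iff]
    omega
  · rw [youngEntry_of_notMem (by simp [mem_youngCells])]
    omega

theorem IsSSYT.shapeBelowLast_eq_iff (hlam : Antitone lam) (hT : IsSSYT T) {f : Fin m → ℕ} :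
    shapeBelowLast T = f ↔ ∀ q, youngEntry T q < m ↔ q ∈ youngCells m (toShape m f) := by
  constructor
  · rintro rfl ⟨r, c⟩
    rw [mem_youngCells_toShape]
    by_cases hr : r < m
    · simp only [hr, exists_true_left]
      exact (hT.lt_shapeBelowLast_iff (s := ⟨r, hr⟩)).symm
    · simp only [hr, IsEmpty.exists_iff, iff_false, not_lt]
      by_cases hq : (r, c) ∈ youngCells (m + 1) lam
      · have := hT.le_youngEntry hlam r c hq
        omega
      · rw [youngEntry_of_notMem hq]
        omega
  · intro h
    funext s
    refine eq_of_forall_lt_iff fun c => ?_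
    rw [hT.lt_shapeBelowLast_iff, h, mem_youngCells_toShape]
    simp [s.isLt]

-- The clamp `min _ (m - 1)` only serves to land in `Fin m`: it is inactive on the cells of
-- `mu` whenever these are exactly the cells of `T` with entry `< m`.
def restrictBelowLast (T : {q // q ∈ youngCells (m + 1) lam} → Fin (m + 1)) :
    {q // q ∈ youngCells m mu} → Fin m :=
  fun q => ⟨min (youngEntry T q) (m - 1), by have := (mem_youngCells.1 q.2).1; omega⟩

def extendByLast (S : {q // q ∈ youngCells m mu} → Fin m) :
    {q // q ∈ youngCells (m + 1) lam} → Fin (m + 1) :=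
  fun q => ⟨youngEntry S q, Nat.lt_succ_of_le youngEntry_le⟩

theorem youngEntry_restrictBelowLast (hT : ∀ q, youngEntry T q < m ↔ q ∈ youngCells m mu)
    (q : ℕ × ℕ) : youngEntry (restrictBelowLast (mu := mu) T) q = min (youngEntry T q) m := by
  by_cases h : q ∈ youngCells m mu
  · have := (hT q).2 h
    rw [youngEntry_of_mem h]
    simp only [restrictBelowLast]
    omega
  · have := (hT q).not.2 h
    rw [youngEntry_of_notMem h]
    omega

theorem youngEntry_extendByLast_of_mem (h : q ∈ youngCells (m + 1) lam) :
    youngEntry (extendByLast (lam := lam) S) q = youngEntry S q := by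
  rw [youngEntry_of_mem h]
  rfl

theorem youngEntry_le_youngEntry_extendByLast :
    youngEntry S q ≤ youngEntry (extendByLast (lam := lam) S) q := by
  by_cases h : q ∈ youngCells (m + 1) lam
  · rw [youngEntry_extendByLast_of_mem h]
  · have := youngEntry_le (T := S) (q := q)
    rw [youngEntry_of_notMem h]
    omega

theorem youngEntry_extendByLast_lt_iff (hsub : youngCells m mu ⊆ youngCells (m + 1) lam) :
    youngEntry (extendByLast (lam := lam) S) q < m ↔ q ∈ youngCells m mu := by
  by_cases h : q ∈ youngCells (m + 1) lam
  · rw [youngEntry_extendByLast_of_mem h, youngEntry_lt_iff]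
  · rw [youngEntry_of_notMem h]
    exact iff_of_false (by omega) fun h' => h (hsub h')

theorem IsSSYT.restrictBelowLast (hT : IsSSYT T) (hsub : youngCells m mu ⊆ youngCells (m + 1) lam)
    (hmu : ∀ q, youngEntry T q < m ↔ q ∈ youngCells m mu) :
    IsSSYT (restrictBelowLast (mu := mu) T) := by
  refine isSSYT_iff_youngEntry.2 fun r c h => ?_
  have hlt := (hmu _).2 h
  have := (isSSYT_iff_youngEntry.1 hT) r c (hsub h)
  simp only [youngEntry_restrictBelowLast hmu]
  omega

theorem IsSSYT.extendByLast {f : Fin m → ℕ}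
    {S : {q // q ∈ youngCells m (toShape m f)} → Fin m}
    (hS : IsSSYT S) (hf : f ∈ interlacing m lam) : IsSSYT (extendByLast (lam := lam) S) := by
  refine isSSYT_iff_youngEntry.2 fun r c h => ?_
  rw [youngEntry_extendByLast_of_mem h]
  refine ⟨(hS.monotone_youngEntry_row r c.le_succ).trans
    youngEntry_le_youngEntry_extendByLast, ?_⟩
  by_cases h' : (r + 1, c) ∈ youngCells (m + 1) lam
  · obtain ⟨hr, hc⟩ := mem_youngCells.1 h'
    have hmu : (r, c) ∈ youngCells m (toShape m f) :=
      mem_youngCells_toShape.2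
        ⟨by omega, hc.trans_le ((mem_interlacing.1 hf) ⟨r, by omega⟩).1⟩
    rw [youngEntry_extendByLast_of_mem h']
    exact ((isSSYT_iff_youngEntry.1 hS) r c hmu).2
  · have := youngEntry_le (T := S) (q := (r, c))
    rw [youngEntry_of_notMem h']
    omega

theorem card_filter_shapeBelowLast_eq (hlam : Antitone lam) {f : Fin m → ℕ}
    (hf : f ∈ interlacing m lam) :
    #{T ∈ ssytFinset (m + 1) lam | shapeBelowLast T = f} = #(ssytFinset m (toShape m f)) := by
  have hsub := youngCells_toShape_subset hf
  refine card_nbij' restrictBelowLast extendByLast ?_ ?_ ?_ ?_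
  · intro T hT
    simp only [coe_filter, mem_ssytFinset, Set.mem_ofPred_eq, mem_coe] at hT ⊢
    exact hT.1.restrictBelowLast hsub ((hT.1.shapeBelowLast_eq_iff hlam).1 hT.2)
  · intro S hS
    simp only [coe_filter, mem_ssytFinset, Set.mem_ofPred_eq, mem_coe] at hS ⊢
    have hS' := hS.extendByLast hf
    exact ⟨hS', (hS'.shapeBelowLast_eq_iff hlam).2 fun q => youngEntry_extendByLast_lt_iff hsub⟩
  · intro T hT
    simp only [coe_filter, mem_ssytFinset, Set.mem_ofPred_eq] at hT
    refine youngEntry_injective (funext fun q => ?_)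
    by_cases h : q ∈ youngCells (m + 1) lam
    · have := (youngEntry_lt_iff (T := T)).2 h
      rw [youngEntry_extendByLast_of_mem h,
        youngEntry_restrictBelowLast ((hT.1.shapeBelowLast_eq_iff hlam).1 hT.2)]
      omega
    · rw [youngEntry_of_notMem h, youngEntry_of_notMem h]
  · intro S hS
    refine youngEntry_injective (funext fun q => ?_)
    rw [youngEntry_restrictBelowLast fun q => youngEntry_extendByLast_lt_iff hsub]
    by_cases h : q ∈ youngCells (m + 1) lam
    · have := youngEntry_le (T := S) (q := q)
      rw [youngEntry_extendByLast_of_mem h]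
      omega
    · rw [youngEntry_of_notMem h, youngEntry_of_notMem fun h' => h (hsub h')]
      omega

theorem card_ssytFinset_succ (hlam : Antitone lam) :
    #(ssytFinset (m + 1) lam) = ∑ f ∈ interlacing m lam, #(ssytFinset m (toShape m f)) := by
  rw [card_eq_sum_card_fiberwise fun T hT =>
    (mem_ssytFinset.1 hT).shapeBelowLast_mem_interlacing hlam]
  exact sum_congr rfl fun f hf => card_filter_shapeBelowLast_eq hlam hf

end RemovingLargestEntries

section CountingFormula

variable {m : ℕ} {lam : ℕ → ℕ}

theorem card_ssytFinset_zero (lam : ℕ → ℕ) : #(ssytFinset 0 lam) = 1 := by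
  have : IsEmpty {q // q ∈ youngCells 0 lam} :=
    ⟨fun q => by simpa using (mem_youngCells.1 q.2).1⟩
  rw [eq_univ_of_forall fun T => mem_ssytFinset.2 ⟨isEmptyElim, isEmptyElim⟩, card_univ,
    Fintype.card_unique]

-- The sequence `λ_i + (m - 1 - i)` of the Weyl dimension formula, read backwards.
def shiftedParts (m : ℕ) (lam : ℕ → ℕ) : Fin m → ℕ := fun t => lam (m - 1 - t) + t

theorem strictMono_shiftedParts (hlam : Antitone lam) : StrictMono (shiftedParts m lam) := by
  intro x y hxy
  have := hlam (show m - 1 - (y : ℕ) ≤ m - 1 - x by omega)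
  simp only [shiftedParts]
  omega

theorem shiftedParts_toShape (f : Fin m → ℕ) (t : Fin m) :
    shiftedParts m (toShape m f) t = f t.rev + t := by
  have h : m - 1 - (t : ℕ) < m := by omega
  simp only [shiftedParts, toShape, dif_pos h]
  rw [show (⟨m - 1 - t, h⟩ : Fin m) = t.rev from Fin.ext (by simp only [Fin.val_rev]; omega)]

theorem shiftedParts_succ_castSucc (t : Fin m) :
    shiftedParts (m + 1) lam t.castSucc = lam (t.rev + 1) + t := by
  simp only [shiftedParts, Fin.val_castSucc, Fin.val_rev]
  rw [show m + 1 - 1 - (t : ℕ) = m - (t + 1) + 1 by omega]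

theorem shiftedParts_succ_succ (t : Fin m) :
    shiftedParts (m + 1) lam t.succ = lam t.rev + t + 1 := by
  simp only [shiftedParts, Fin.val_succ, Fin.val_rev]
  rw [show m + 1 - 1 - ((t : ℕ) + 1) = m - (t + 1) by omega]
  ring

theorem sum_interlacing_shiftedParts {M : Type*} [AddCommMonoid M] (g : (Fin m → ℕ) → M) :
    ∑ f ∈ interlacing m lam, g (shiftedParts m (toShape m f)) =
      ∑ d ∈ Fintype.piFinset fun t : Fin m =>
        Ico (shiftedParts (m + 1) lam t.castSucc) (shiftedParts (m + 1) lam t.succ), g d := by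
  refine sum_nbij' (fun f => shiftedParts m (toShape m f)) (fun d s => d s.rev - s.rev) ?_ ?_ ?_ ?_
    fun _ _ => rfl
  all_goals simp only [mem_interlacing, Fintype.mem_piFinset, mem_Ico,
    shiftedParts_toShape, shiftedParts_succ_castSucc, shiftedParts_succ_succ, Fin.rev_rev]
  · intro f hf t
    have := hf t.rev
    omega
  · intro d hd s
    have := hd s.rev
    simp only [Fin.rev_rev] at this
    omega
  · intro f _
    funext s
    omega
  · intro d hd
    funext t
    have := hd t
    rw [shiftedParts_toShape, Fin.rev_rev]
    omega

theorem card_ssytFinset_eq_det_chooseMatrix :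
    ∀ m (lam : ℕ → ℕ), Antitone lam →
      (#(ssytFinset m lam) : ℤ) = (chooseMatrix (shiftedParts m lam)).det
  | 0, lam, _ => by simp [card_ssytFinset_zero]
  | m + 1, lam, hlam => calc
    (#(ssytFinset (m + 1) lam) : ℤ)
      = ∑ f ∈ interlacing m lam, (#(ssytFinset m (toShape m f)) : ℤ) := by
        rw [card_ssytFinset_succ hlam]; push_cast; rfl
    _ = ∑ f ∈ interlacing m lam, (chooseMatrix (shiftedParts m (toShape m f))).det :=
        sum_congr rfl fun f hf => card_ssytFinset_eq_det_chooseMatrix m _ (antitone_toShape hf)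
    _ = _ := sum_interlacing_shiftedParts fun d => (chooseMatrix d).det
    _ = (chooseMatrix (shiftedParts (m + 1) lam)).det :=
        sum_det_chooseMatrix_Ico (strictMono_shiftedParts hlam).monotone


theorem card_ssytFinset_mul_prod_factorial (hlam : Antitone lam) :
    #(ssytFinset m lam) * ∏ r : Fin m, (r : ℕ).factorial =
      ∏ x : Fin m, ∏ y ∈ Ioi x, (shiftedParts m lam y - shiftedParts m lam x) := by
  have h := det_chooseMatrix_mul_prod_factorial (shiftedParts m lam)
  rw [← card_ssytFinset_eq_det_chooseMatrix m lam hlam, det_vandermonde] at h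
  have hmono := strictMono_shiftedParts (m := m) hlam
  exact_mod_cast h.trans (prod_congr rfl fun x _ => prod_congr rfl fun y hy =>
    (Nat.cast_sub (hmono (mem_Ioi.1 hy)).le).symm)

theorem not_dvd_card_ssytFinset {p : ℕ} (hp : p.Prime) (hlam : Antitone lam)
    (hbound : ∀ r < m, lam r + m ≤ p) : ¬ p ∣ #(ssytFinset m lam) := by
  intro hdvd
  have hprod := card_ssytFinset_mul_prod_factorial hlam ▸ dvd_mul_of_dvd_left hdvd _
  obtain ⟨x, -, hx⟩ := (Prime.dvd_finsetProd_iff hp.prime _).1 hprod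
  obtain ⟨y, hy, hxy⟩ := (Prime.dvd_finsetProd_iff hp.prime _).1 hx
  have hlt := strictMono_shiftedParts hlam (mem_Ioi.1 hy)
  have := hbound (m - 1 - y) (by omega)
  refine Nat.not_dvd_of_pos_of_lt (by omega) ?_ hxy
  simp only [shiftedParts] at hlt ⊢
  omega

end CountingFormula

theorem antitone_rectPart (numParts partSize : ℕ) : Antitone (rectPart numParts partSize) := by
  intro a b hab
  unfold rectPart
  split_ifs <;> omega

theorem card_rect_ssyt_not_dvd_prime_general
    (p k i j : ℕ) (hp : Nat.Prime p) (hik : i ≤ k) :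
    ¬ (p ∣ (ssytFinset (p - k) (rectPart j i)).card) :=
  not_dvd_card_ssytFinset hp (antitone_rectPart j i) fun r hr => by
    unfold rectPart
    split_ifs <;> omega

/-- For `p` prime, `1 ≤ i ≤ k ≤ p−1` and `1 ≤ j ≤ p−k`, the number of semistandard
Young tableaux of rectangular shape `(i^j)` (j rows, i columns) with entries in
`{1,…,p−k}` is not divisible by `p`. -/
theorem card_rect_ssyt_not_dvd_prime
    (p k i j : ℕ) (hp : Nat.Prime p) (hi1 : 1 ≤ i) (hik : i ≤ k) (hk : k ≤ p - 1)
    (hj1 : 1 ≤ j) (hj : j ≤ p - k) :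
    ¬ (p ∣ (ssytFinset (p - k) (rectPart j i)).card) :=
  card_rect_ssyt_not_dvd_prime_general p k i j hp hik

end
end

section
/- Fix integers n ≥ 2 and 1 ≤ k ≤ n−1, and real numbers a > b. Let Δ ⊂ ℝ^{k(n−k)}, with coordinates Φ_{i,j} for 1 ≤ i ≤ k and 1 ≤ j ≤ n−k, be the set of points satisfying: Φ_{i,j} ≥ Φ_{i+1,j} for 1 ≤ i ≤ k−1, 1 ≤ j ≤ n−k; Φ_{i,j+1} ≥ Φ_{i,j} for 1 ≤ i ≤ k, 1 ≤ j ≤ n−k−1; Φ_{1,n−k} ≤ a; and Φ_{k,1} ≥ b. Then Δ is a compact convex polytope with nonempty interior (dimension k(n−k)), and Δ has exactly (k−1)(n−k) + k(n−k−1) + 2 faces of dimension k(n−k)−1 (facets); moreover each of the listed inequalities defines exactly one facet, with inward primitive integral normal vectors respectively e_{i,j} − e_{i+1,j}, e_{i,j+1} − e_{i,j}, −e_{1,n−k}, and e_{k,1}, where e_{i,j} denotes the standard basis vector of the coordinate Φ_{i,j}. -/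
/-!
Δ is the polyhedron `{Φ | c_q ≤ ⟪v_q, Φ⟫}` of its listed inequalities, and for each inequality
`q` there is a point of Δ at which `q` is the only tight one: an integer grid, strictly monotone
along rows and columns except at one collapsed step, rescaled to `[b, a]`.

For any polyhedron with such points, the midpoint of two of them is strictly feasible, so the
polyhedron is full-dimensional; moving from the point of `q` within the hyperplane `v_q = c_q`
shows that the `q`-th face spans `ker v_q`; and different `q` give different faces. Conversely,
if an exposed face `F` of codimension one lay in no bounding hyperplane, a barycenter of points
of `F` off each of them would be a strictly feasible minimizer of the exposing functional,
which must then vanish, making `F` the whole polyhedron. So `F` lies in some `q`-th face and,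
having the same dimension, equals it.
-/

noncomputable section

/-- The ambient space `ℝ^{k(n−k)}` (here `m = n−k`), with coordinates `Φ (i,j)`;
the pair `(i,j) : Fin k × Fin m` corresponds to the 1-based coordinate `Φ_{i+1,j+1}`. -/
abbrev GCSpace (k m : ℕ) := (Fin k × Fin m) → ℝ

/-- The Gelfand–Cetlin polytope of `Gr(k,n)` (with `m = n−k`), cut out by
`Φ_{i,j} ≥ Φ_{i+1,j}`, `Φ_{i,j+1} ≥ Φ_{i,j}`, `Φ_{1,m} ≤ a` and `Φ_{k,1} ≥ b`. -/
def gcPolytope (k m : ℕ) (a b : ℝ) : Set (GCSpace k m) :=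
  {Φ | (∀ (i j : ℕ) (h1 : i + 1 < k) (h2 : j < m),
          Φ (⟨i + 1, h1⟩, ⟨j, h2⟩) ≤ Φ (⟨i, Nat.lt_of_succ_lt h1⟩, ⟨j, h2⟩)) ∧
       (∀ (i j : ℕ) (h1 : i < k) (h2 : j + 1 < m),
          Φ (⟨i, h1⟩, ⟨j, Nat.lt_of_succ_lt h2⟩) ≤ Φ (⟨i, h1⟩, ⟨j + 1, h2⟩)) ∧
       (∀ (h1 : 0 < k) (h2 : 0 < m),
          Φ (⟨0, h1⟩, ⟨m - 1, Nat.sub_one_lt h2.ne'⟩) ≤ a) ∧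
       (∀ (h1 : 0 < k) (h2 : 0 < m),
          b ≤ Φ (⟨k - 1, Nat.sub_one_lt h1.ne'⟩, ⟨0, h2⟩))}

/-- `F` is a (nonempty, exposed) face of `Δ`: the set of points of `Δ` where some
affine functional attains its minimum on `Δ`. -/
def IsFaceOf {k m : ℕ} (Δ F : Set (GCSpace k m)) : Prop :=
  F.Nonempty ∧ ∃ ℓ : GCSpace k m →ₗ[ℝ] ℝ, F = {x ∈ Δ | ∀ y ∈ Δ, ℓ x ≤ ℓ y}

/-- The dimension of a subset of `ℝ^{k·m}`: the dimension of its affine span. -/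
def faceDim {k m : ℕ} (F : Set (GCSpace k m)) : ℕ :=
  Module.finrank ℝ (vectorSpan ℝ F)

/-- Euclidean inner product on `GCSpace k m`. -/
def gcDot {k m : ℕ} (v x : GCSpace k m) : ℝ := ∑ p, v p * x p

/-- The standard basis vector `e_{i,j}`. -/
def gcBasis (k m : ℕ) (i : Fin k) (j : Fin m) : GCSpace k m := Pi.single (i, j) 1

/-- Index type for the defining inequalities of the Gelfand–Cetlin polytope:
`(k−1)·m` row inequalities, `k·(m−1)` column inequalities, and the two exceptional ones. -/
abbrev GCIneq (k m : ℕ) := (Fin (k - 1) × Fin m) ⊕ ((Fin k × Fin (m - 1)) ⊕ (Unit ⊕ Unit))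

/-- The inward primitive integral normal vector and constant `(v, c)` of each defining
inequality, the inequality being `⟪v, Φ⟫ ≥ c`. -/
def gcNormal (k m : ℕ) (hk : 0 < k) (hm : 0 < m) (a b : ℝ) :
    GCIneq k m → GCSpace k m × ℝ
  | .inl (i, j) =>
      (gcBasis k m ⟨i.1, by have := i.2; omega⟩ j -
        gcBasis k m ⟨i.1 + 1, by have := i.2; omega⟩ j, 0)
  | .inr (.inl (i, j)) =>
      (gcBasis k m i ⟨j.1 + 1, by have := j.2; omega⟩ -
        gcBasis k m i ⟨j.1, by have := j.2; omega⟩, 0)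
  | .inr (.inr (.inl _)) =>
      (-(gcBasis k m ⟨0, hk⟩ ⟨m - 1, Nat.sub_one_lt hm.ne'⟩), -a)
  | .inr (.inr (.inr _)) =>
      (gcBasis k m ⟨k - 1, Nat.sub_one_lt hk.ne'⟩ ⟨0, hm⟩, b)

open Filter Topology Module

theorem mem_vectorSpan_of_add_smul_mem {E : Type*} [AddCommGroup E] [Module ℝ E] {S : Set E}
    {x w : E} {t : ℝ} (hx : x ∈ S) (ht : t ≠ 0) (h : x + t • w ∈ S) : w ∈ vectorSpan ℝ S := by
  have := Submodule.smul_mem _ t⁻¹ (vsub_mem_vectorSpan ℝ h hx)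
  rwa [vsub_eq_sub, add_sub_cancel_left, smul_smul, inv_mul_cancel₀ ht, one_smul] at this

theorem vectorSpan_le_ker {R M F : Type*} [Ring R] [AddCommGroup M] [Module R M]
    [AddCommGroup F] [Module R F] {S : Set M} {f : M →ₗ[R] F}
    (h : ∀ x ∈ S, ∀ y ∈ S, f x = f y) : vectorSpan R S ≤ LinearMap.ker f := by
  rw [vectorSpan_def, Submodule.span_le]
  rintro _ ⟨x, hx, y, hy, rfl⟩
  simp [h x hx y hy]

theorem Convex.setOf_forall_le {E : Type*} [AddCommGroup E] [Module ℝ E] {P : Set E}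
    (hP : Convex ℝ P) (f : E →ₗ[ℝ] ℝ) : Convex ℝ {x ∈ P | ∀ y ∈ P, f x ≤ f y} := by
  rintro x ⟨hxP, hx⟩ y ⟨hyP, hy⟩ s t hs ht hst
  refine ⟨hP hxP hyP hs ht hst, fun z hz => ?_⟩
  calc f (s • x + t • y) = s * f x + t * f y := by simp
    _ ≤ s * f z + t * f z := by gcongr <;> simp_all
    _ = f z := by rw [← add_mul, hst, one_mul]

section Polyhedron

variable {E ι : Type*} [AddCommGroup E] [Module ℝ E] (ℓ : ι → E →ₗ[ℝ] ℝ) (c : ι → ℝ)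

def polyhedron : Set E := {x | ∀ i, c i ≤ ℓ i x}

def ineqFace (q : ι) : Set E := {x ∈ polyhedron ℓ c | ℓ q x = c q}

def IsFacetPoint (q : ι) (x : E) : Prop := ℓ q x = c q ∧ ∀ i ≠ q, c i < ℓ i x

variable {ℓ c}

theorem convex_polyhedron : Convex ℝ (polyhedron ℓ c) := by
  rw [polyhedron, Set.ofPred_forall]
  exact convex_iInter fun i => convex_halfSpace_ge (ℓ i).isLinear (c i)

theorem ineqFace_eq_setOf_forall_le {q : ι} {x₀ : E} (hx₀ : x₀ ∈ ineqFace ℓ c q) :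
    ineqFace ℓ c q = {x ∈ polyhedron ℓ c | ∀ y ∈ polyhedron ℓ c, ℓ q x ≤ ℓ q y} := by
  ext x
  refine ⟨fun ⟨hx, hq⟩ => ⟨hx, fun y hy => hq ▸ hy q⟩, fun ⟨hx, hmin⟩ => ⟨hx, ?_⟩⟩
  exact le_antisymm ((hmin x₀ hx₀.1).trans_eq hx₀.2) (hx q)

theorem subset_of_vectorSpan_le {f : E →ₗ[ℝ] ℝ} {F G : Set E} {x₀ : E}
    (hF : F = {x ∈ polyhedron ℓ c | ∀ y ∈ polyhedron ℓ c, f x ≤ f y}) (hx₀F : x₀ ∈ F)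
    (hx₀G : x₀ ∈ G) (hGP : G ⊆ polyhedron ℓ c) (hGF : vectorSpan ℝ G ≤ vectorSpan ℝ F) :
    G ⊆ F := by
  have hconst : ∀ x ∈ F, ∀ y ∈ F, f x = f y := by
    rw [hF]
    exact fun x hx y hy => le_antisymm (hx.2 y hy.1) (hy.2 x hx.1)
  intro y hy
  have hfy : f y = f x₀ := by
    simpa [sub_eq_zero] using vectorSpan_le_ker hconst (hGF (vsub_mem_vectorSpan ℝ hy hx₀G))
  rw [hF] at hx₀F ⊢
  exact ⟨hGP hy, fun z hz => hfy ▸ hx₀F.2 z hz⟩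

theorem IsFacetPoint.mem_polyhedron {q : ι} {x : E} (hx : IsFacetPoint ℓ c q x) :
    x ∈ polyhedron ℓ c := fun i => by
  rcases eq_or_ne i q with rfl | hi
  exacts [hx.1.ge, (hx.2 i hi).le]

theorem IsFacetPoint.mem_ineqFace {q : ι} {x : E} (hx : IsFacetPoint ℓ c q x) :
    x ∈ ineqFace ℓ c q :=
  ⟨hx.mem_polyhedron, hx.1⟩

theorem ineqFace_injective (hfacet : ∀ q, ∃ x, IsFacetPoint ℓ c q x) :
    Function.Injective (ineqFace ℓ c) := by
  intro q q' h
  by_contra hne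
  obtain ⟨x, hx⟩ := hfacet q
  exact (hx.2 q' (Ne.symm hne)).ne' (h ▸ hx.mem_ineqFace : x ∈ ineqFace ℓ c q').2

theorem exists_forall_lt_of_facetPoints [Nontrivial ι] (hfacet : ∀ q, ∃ x, IsFacetPoint ℓ c q x) :
    ∃ x, ∀ i, c i < ℓ i x := by
  obtain ⟨q, q', hqq'⟩ := exists_pair_ne ι
  obtain ⟨x, hx⟩ := hfacet q
  obtain ⟨x', hx'⟩ := hfacet q'
  refine ⟨(2 : ℝ)⁻¹ • (x + x'), fun i => ?_⟩
  have h := hx.mem_polyhedron i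
  have h' := hx'.mem_polyhedron i
  simp only [map_smul, map_add, smul_eq_mul]
  rcases eq_or_ne i q with rfl | hi
  · linarith [hx'.2 i hqq']
  · linarith [hx.2 i hi]

theorem ne_zero_of_facetPoints [Nontrivial ι] (hfacet : ∀ q, ∃ x, IsFacetPoint ℓ c q x) (q : ι) :
    ℓ q ≠ 0 := by
  obtain ⟨q', hq'⟩ := exists_ne q
  obtain ⟨x, hx⟩ := hfacet q
  obtain ⟨x', hx'⟩ := hfacet q'
  intro h
  have h₁ := hx.1
  have h₂ := hx'.2 q hq'.symm
  simp only [h, LinearMap.zero_apply] at h₁ h₂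
  linarith

theorem isClosed_polyhedron [TopologicalSpace E] [IsTopologicalAddGroup E] [ContinuousSMul ℝ E]
    [T2Space E] [FiniteDimensional ℝ E] : IsClosed (polyhedron ℓ c) := by
  rw [polyhedron, Set.ofPred_forall]
  exact isClosed_iInter fun i => isClosed_le continuous_const (ℓ i).continuous_of_finiteDimensional

variable [Finite ι]

theorem mem_interior_polyhedron [TopologicalSpace E] [IsTopologicalAddGroup E]
    [ContinuousSMul ℝ E] [T2Space E] [FiniteDimensional ℝ E] {x : E} (hx : ∀ i, c i < ℓ i x) :
    x ∈ interior (polyhedron ℓ c) := by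
  refine interior_maximal (t := {y | ∀ i, c i < ℓ i y}) (fun y hy i => (hy i).le) ?_ hx
  rw [Set.ofPred_forall]
  exact isOpen_iInter_of_finite fun i =>
    isOpen_lt continuous_const (ℓ i).continuous_of_finiteDimensional

theorem eventually_add_smul_mem_polyhedron {x : E} (w : E) (hx : x ∈ polyhedron ℓ c)
    (hw : ∀ i, ℓ i x = c i → ℓ i w = 0) : ∀ᶠ t in 𝓝 (0 : ℝ), x + t • w ∈ polyhedron ℓ c := by
  refine eventually_all.2 fun i => ?_
  simp only [map_add, map_smul, smul_eq_mul]
  rcases (hx i).eq_or_lt with h | h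
  · exact .of_forall fun t => by simp [hw i h.symm, h]
  · have hcont : Continuous fun t : ℝ => ℓ i x + t * ℓ i w := by fun_prop
    have := hcont.tendsto 0
    simp only [zero_mul, add_zero] at this
    exact (this.eventually (lt_mem_nhds h)).mono fun _ => le_of_lt

theorem exists_pos_add_smul_mem_polyhedron {x : E} (w : E) (hx : x ∈ polyhedron ℓ c)
    (hw : ∀ i, ℓ i x = c i → ℓ i w = 0) : ∃ t : ℝ, 0 < t ∧ x + t • w ∈ polyhedron ℓ c :=
  ((eventually_nhdsWithin_of_eventually_nhds (s := Set.Ioi 0)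
    (eventually_add_smul_mem_polyhedron w hx hw)).and self_mem_nhdsWithin).exists.imp
    fun _ h => h.symm

theorem vectorSpan_polyhedron {x : E} (hx : ∀ i, c i < ℓ i x) :
    vectorSpan ℝ (polyhedron ℓ c) = ⊤ := by
  refine eq_top_iff.2 fun w _ => ?_
  have hxP : x ∈ polyhedron ℓ c := fun i => (hx i).le
  obtain ⟨t, ht, hmem⟩ :=
    exists_pos_add_smul_mem_polyhedron w hxP fun i h => absurd h (hx i).ne'
  exact mem_vectorSpan_of_add_smul_mem hxP ht.ne' hmem

theorem vectorSpan_ineqFace {q : ι} {x₀ : E} (hx₀ : IsFacetPoint ℓ c q x₀) :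
    vectorSpan ℝ (ineqFace ℓ c q) = LinearMap.ker (ℓ q) := by
  refine le_antisymm (vectorSpan_le_ker fun x hx y hy => hx.2.trans hy.2.symm) fun w hw => ?_
  obtain ⟨t, ht, hmem⟩ := exists_pos_add_smul_mem_polyhedron w hx₀.mem_polyhedron fun i hi => by
    rcases eq_or_ne i q with rfl | hiq
    exacts [hw, absurd hi (hx₀.2 i hiq).ne']
  refine mem_vectorSpan_of_add_smul_mem hx₀.mem_ineqFace ht.ne' ⟨hmem, ?_⟩
  simp [hx₀.1, LinearMap.mem_ker.1 hw]

theorem finrank_vectorSpan_ineqFace [FiniteDimensional ℝ E] [Nontrivial ι]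
    (hfacet : ∀ q, ∃ x, IsFacetPoint ℓ c q x) (q : ι) :
    finrank ℝ (vectorSpan ℝ (ineqFace ℓ c q)) = finrank ℝ E - 1 := by
  obtain ⟨x, hx⟩ := hfacet q
  rw [vectorSpan_ineqFace hx,
    ← Module.Dual.finrank_ker_add_one_of_ne_zero (ne_zero_of_facetPoints hfacet q),
    Nat.add_sub_cancel]

theorem exists_forall_lt_of_convex [Nonempty ι] {S : Set E} (hS : Convex ℝ S)
    (hSP : S ⊆ polyhedron ℓ c) (h : ∀ i, ∃ y ∈ S, c i < ℓ i y) : ∃ z ∈ S, ∀ i, c i < ℓ i z := by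
  have := Fintype.ofFinite ι
  choose y hyS hy using h
  set w : ℝ := (Fintype.card ι : ℝ)⁻¹
  have hw : 0 < w := inv_pos.2 (Nat.cast_pos.2 Fintype.card_pos)
  have hsum : ∑ _i : ι, w = 1 := by simp [w, Finset.card_univ]
  refine ⟨∑ j, w • y j, hS.sum_mem (fun _ _ => hw.le) hsum fun j _ => hyS j, fun i => ?_⟩
  calc c i = ∑ _j : ι, w * c i := by rw [← Finset.sum_mul, hsum, one_mul]
    _ < ∑ j, w * ℓ i (y j) := Finset.sum_lt_sum
        (fun j _ => mul_le_mul_of_nonneg_left (hSP (hyS j) i) hw.le)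
        ⟨i, Finset.mem_univ _, mul_lt_mul_of_pos_left (hy i) hw⟩
    _ = ℓ i (∑ j, w • y j) := by simp [map_sum]

theorem eq_zero_of_isMinOn_of_forall_lt {f : E →ₗ[ℝ] ℝ} {z : E} (hz : ∀ i, c i < ℓ i z)
    (hmin : IsMinOn f (polyhedron ℓ c) z) : f = 0 := by
  have hzP : z ∈ polyhedron ℓ c := fun i => (hz i).le
  have key : ∀ w, 0 ≤ f w := fun w => by
    obtain ⟨t, ht, hmem⟩ :=
      exists_pos_add_smul_mem_polyhedron w hzP fun i h => absurd h (hz i).ne'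
    have := isMinOn_iff.1 hmin _ hmem
    simp only [map_add, map_smul, smul_eq_mul, le_add_iff_nonneg_right] at this
    exact nonneg_of_mul_nonneg_right this ht
  ext w
  simpa using le_antisymm (by simpa using key (-w)) (key w)

theorem exists_eq_ineqFace [FiniteDimensional ℝ E] [Nontrivial ι]
    (hfacet : ∀ q, ∃ x, IsFacetPoint ℓ c q x) {F : Set E} {f : E →ₗ[ℝ] ℝ}
    (hFne : F.Nonempty) (hF : F = {x ∈ polyhedron ℓ c | ∀ y ∈ polyhedron ℓ c, f x ≤ f y})
    (hdim : finrank ℝ (vectorSpan ℝ F) = finrank ℝ E - 1) : ∃ q, F = ineqFace ℓ c q := by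
  obtain ⟨x₀, hx₀⟩ := hFne
  have hFP : F ⊆ polyhedron ℓ c := hF ▸ fun x hx => hx.1
  obtain ⟨q, hq⟩ : ∃ q, ∀ x ∈ F, ℓ q x = c q := by
    by_contra! h
    obtain ⟨z, hzF, hz⟩ := exists_forall_lt_of_convex (hF ▸ convex_polyhedron.setOf_forall_le f)
      hFP fun i => (h i).imp fun y hy => ⟨hy.1, (hFP hy.1 i).lt_of_ne' hy.2⟩
    have hf := eq_zero_of_isMinOn_of_forall_lt hz (isMinOn_iff.2 (hF ▸ hzF).2)
    obtain ⟨x, hx⟩ := exists_forall_lt_of_facetPoints hfacet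
    obtain ⟨q⟩ := ‹Nontrivial ι›.to_nonempty
    have := Module.Dual.finrank_ker_add_one_of_ne_zero (ne_zero_of_facetPoints hfacet q)
    rw [show F = polyhedron ℓ c by simp [hF, hf], vectorSpan_polyhedron hx, finrank_top] at hdim
    omega
  have hFq : F ⊆ ineqFace ℓ c q := fun x hx => ⟨hFP hx, hq x hx⟩
  have hspan := Submodule.eq_of_le_of_finrank_le (vectorSpan_mono ℝ hFq)
    (by rw [hdim, finrank_vectorSpan_ineqFace hfacet])
  exact ⟨q, hFq.antisymm (subset_of_vectorSpan_le hF hx₀ (hFq hx₀) (fun x hx => hx.1) hspan.ge)⟩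

theorem setOf_facets_eq_range [FiniteDimensional ℝ E] [Nontrivial ι]
    (hfacet : ∀ q, ∃ x, IsFacetPoint ℓ c q x) :
    {F : Set E | (F.Nonempty ∧ ∃ f : E →ₗ[ℝ] ℝ,
        F = {x ∈ polyhedron ℓ c | ∀ y ∈ polyhedron ℓ c, f x ≤ f y}) ∧
      finrank ℝ (vectorSpan ℝ F) = finrank ℝ E - 1} = Set.range (ineqFace ℓ c) := by
  ext F
  refine ⟨fun ⟨⟨hne, f, hF⟩, hdim⟩ => ?_, ?_⟩
  · obtain ⟨q, rfl⟩ := exists_eq_ineqFace hfacet hne hF hdim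
    exact ⟨q, rfl⟩
  · rintro ⟨q, rfl⟩
    obtain ⟨x, hx⟩ := hfacet q
    exact ⟨⟨⟨x, hx.mem_ineqFace⟩, ℓ q, ineqFace_eq_setOf_forall_le hx.mem_ineqFace⟩,
      finrank_vectorSpan_ineqFace hfacet q⟩

end Polyhedron

namespace GelfandCetlin

variable {k m : ℕ}

theorem gcPolytope_apply_mono_col {a b : ℝ} {x : GCSpace k m} (hx : x ∈ gcPolytope k m a b)
    (i : Fin k) {j j' : ℕ} (hjj' : j ≤ j') (hj' : j' < m) :
    x (i, ⟨j, hjj'.trans_lt hj'⟩) ≤ x (i, ⟨j', hj'⟩) := by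
  induction j', hjj' using Nat.le_induction with
  | base => rfl
  | succ j' hjj' ih => exact (ih (by omega)).trans (hx.2.1 i j' i.2 hj')

theorem gcPolytope_apply_anti_row {a b : ℝ} {x : GCSpace k m} (hx : x ∈ gcPolytope k m a b)
    (j : Fin m) {i i' : ℕ} (hii' : i ≤ i') (hi' : i' < k) :
    x (⟨i', hi'⟩, j) ≤ x (⟨i, hii'.trans_lt hi'⟩, j) := by
  induction i', hii' using Nat.le_induction with
  | base => rfl
  | succ i' hii' ih => exact (hx.1 i' j hi' j.2).trans (ih (by omega))

theorem gcPolytope_subset_Icc (a b : ℝ) :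
    gcPolytope k m a b ⊆ Set.Icc (fun _ => b) (fun _ => a) := by
  rintro x hx
  refine ⟨fun ⟨i, j⟩ => ?_, fun ⟨i, j⟩ => ?_⟩ <;> have := i.2 <;> have := j.2
  · calc b ≤ x (⟨k - 1, by omega⟩, ⟨0, by omega⟩) := hx.2.2.2 (by omega) (by omega)
      _ ≤ x (i, ⟨0, by omega⟩) := gcPolytope_apply_anti_row hx _ (by omega) _
      _ ≤ x (i, j) := gcPolytope_apply_mono_col hx i (Nat.zero_le _) j.2
  · calc x (i, j) ≤ x (i, ⟨m - 1, by omega⟩) := gcPolytope_apply_mono_col hx i (by omega) _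
      _ ≤ x (⟨0, by omega⟩, ⟨m - 1, by omega⟩) :=
        gcPolytope_apply_anti_row hx _ (Nat.zero_le _) i.2
      _ ≤ a := hx.2.2.1 (by omega) (by omega)

instance : Nontrivial (GCIneq k m) :=
  ⟨.inr (.inr (.inl ())), .inr (.inr (.inr ())), by simp⟩

variable (hk : 0 < k) (hm : 0 < m)

def gcSlack {R : Type*} [Ring R] (a b : R) (x : Fin k × Fin m → R) : GCIneq k m → R
  | .inl (i, j) => x (⟨i, by omega⟩, j) - x (⟨i + 1, by omega⟩, j)
  | .inr (.inl (i, j)) => x (i, ⟨j + 1, by omega⟩) - x (i, ⟨j, by omega⟩)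
  | .inr (.inr (.inl _)) => a - x (⟨0, hk⟩, ⟨m - 1, by omega⟩)
  | .inr (.inr (.inr _)) => x (⟨k - 1, by omega⟩, ⟨0, hm⟩) - b

theorem gcDot_gcNormal_sub (a b : ℝ) (x : GCSpace k m) (q : GCIneq k m) :
    gcDot (gcNormal k m hk hm a b q).1 x - (gcNormal k m hk hm a b q).2 =
      gcSlack hk hm a b x q := by
  change (gcNormal k m hk hm a b q).1 ⬝ᵥ x - _ = _
  rcases q with ⟨i, j⟩ | ⟨i, j⟩ | _ | _ <;>
    simp [gcNormal, gcSlack, gcBasis, sub_dotProduct, neg_dotProduct, single_dotProduct]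
  all_goals ring

theorem mem_gcPolytope_iff_forall_gcSlack_nonneg {a b : ℝ} {x : GCSpace k m} :
    x ∈ gcPolytope k m a b ↔ ∀ q, 0 ≤ gcSlack hk hm a b x q := by
  constructor
  · rintro ⟨hrow, hcol, htop, hbot⟩ (⟨i, j⟩ | ⟨i, j⟩ | _ | _) <;> simp only [gcSlack, sub_nonneg]
    exacts [hrow i j (by omega) j.2, hcol i j i.2 (by omega), htop hk hm, hbot hk hm]
  · intro h
    refine ⟨fun i j hi hj => ?_, fun i j hi hj => ?_, fun _ _ => ?_, fun _ _ => ?_⟩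
    · simpa [gcSlack] using h (.inl (⟨i, by omega⟩, ⟨j, hj⟩))
    · simpa [gcSlack] using h (.inr (.inl (⟨i, hi⟩, ⟨j, by omega⟩)))
    · simpa [gcSlack] using h (.inr (.inr (.inl ())))
    · simpa [gcSlack] using h (.inr (.inr (.inr ())))

def gcForm (a b : ℝ) (q : GCIneq k m) : GCSpace k m →ₗ[ℝ] ℝ :=
  dotProductBilin ℝ ℝ (gcNormal k m hk hm a b q).1

theorem gcPolytope_eq_polyhedron (a b : ℝ) :
    gcPolytope k m a b = polyhedron (gcForm hk hm a b) fun q => (gcNormal k m hk hm a b q).2 := by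
  ext x
  rw [mem_gcPolytope_iff_forall_gcSlack_nonneg hk hm]
  refine forall_congr' fun q => ?_
  rw [← gcDot_gcNormal_sub, sub_nonneg]
  rfl

include hk hm in
theorem isCompact_gcPolytope (a b : ℝ) : IsCompact (gcPolytope k m a b) :=
  isCompact_Icc.of_isClosed_subset (gcPolytope_eq_polyhedron hk hm a b ▸ isClosed_polyhedron)
    (gcPolytope_subset_Icc a b)

/-- Row steps 1 and column steps 2 (or the reverse) make every inequality strict; lowering
one cell by 1 then makes exactly one row (or column) inequality tight. -/
theorem exists_int_gcSlack (q₀ : GCIneq k m) :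
    ∃ (A : ℤ) (y : Fin k × Fin m → ℤ), 0 < A ∧ gcSlack hk hm A 0 y q₀ = 0 ∧
      ∀ q ≠ q₀, 0 < gcSlack hk hm A 0 y q := by
  rcases q₀ with ⟨i₀, j₀⟩ | ⟨i₀, j₀⟩ | _ | _
  · refine ⟨k + 2 * m - 1, fun p => k - p.1 + 2 * p.2 - if p = (⟨i₀, by omega⟩, j₀) then 1 else 0,
      by omega, by simp [gcSlack]; omega, ?_⟩
    rintro (⟨i, j⟩ | ⟨i, j⟩ | _ | _) hq <;> simp [gcSlack, Prod.ext_iff, Fin.ext_iff] at hq ⊢ <;>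
      (try split_ifs) <;> omega
  · refine ⟨2 * k + m, fun p => 2 * (k - p.1) + p.2 - if p = (i₀, ⟨j₀ + 1, by omega⟩) then 1 else 0,
      by omega, by simp [gcSlack]; omega, ?_⟩
    rintro (⟨i, j⟩ | ⟨i, j⟩ | _ | _) hq <;> simp [gcSlack, Prod.ext_iff, Fin.ext_iff] at hq ⊢ <;>
      (try split_ifs) <;> omega
  · refine ⟨k + m - 1, fun p => k - p.1 + p.2, by omega, by simp [gcSlack]; omega, ?_⟩
    rintro (⟨i, j⟩ | ⟨i, j⟩ | _ | _) hq <;> simp [gcSlack] at hq ⊢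
    all_goals omega
  · refine ⟨k + m - 1, fun p => k - 1 - p.1 + p.2, by omega, by simp [gcSlack]; omega, ?_⟩
    rintro (⟨i, j⟩ | ⟨i, j⟩ | _ | _) hq <;> simp [gcSlack] at hq ⊢
    all_goals omega

theorem gcSlack_affine (s b : ℝ) (A : ℤ) (y : Fin k × Fin m → ℤ) (q : GCIneq k m) :
    gcSlack hk hm (b + s * A) b (fun p => b + s * y p) q = s * gcSlack hk hm A 0 y q := by
  rcases q with ⟨i, j⟩ | ⟨i, j⟩ | _ | _ <;> simp [gcSlack] <;> ring

theorem exists_isFacetPoint_gcForm {a b : ℝ} (hab : b < a) (q₀ : GCIneq k m) :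
    ∃ x, IsFacetPoint (gcForm hk hm a b) (fun q => (gcNormal k m hk hm a b q).2) q₀ x := by
  obtain ⟨A, y, hA, hq₀, hq⟩ := exists_int_gcSlack hk hm q₀
  obtain ⟨s, hs, rfl⟩ : ∃ s : ℝ, 0 < s ∧ a = b + s * A :=
    ⟨(a - b) / A, div_pos (sub_pos.2 hab) (Int.cast_pos.2 hA), by field_simp; ring⟩
  have key : ∀ q, gcForm hk hm (b + s * A) b q (fun p => b + s * y p) -
      (gcNormal k m hk hm (b + s * A) b q).2 = s * gcSlack hk hm A 0 y q := fun q =>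
    (gcDot_gcNormal_sub hk hm _ _ _ q).trans (gcSlack_affine hk hm s b A y q)
  refine ⟨fun p => b + s * y p, ?_, fun q hne => ?_⟩
  · simpa [hq₀, sub_eq_zero] using key q₀
  · have := key q
    have := mul_pos hs (Int.cast_pos.2 (hq q hne))
    linarith

end GelfandCetlin

open GelfandCetlin in
/-- The Gelfand–Cetlin polytope `Δ` of `Gr(k,n)` is a compact convex polytope of full
dimension `k(n−k)`; it has exactly `(k−1)(n−k) + k(n−k−1) + 2` facets, and each of the
listed defining inequalities defines exactly one facet, with inward primitive integral
normal vectors `e_{i,j} − e_{i+1,j}`, `e_{i,j+1} − e_{i,j}`, `−e_{1,n−k}` and `e_{k,1}`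
respectively. -/
theorem gelfandCetlin_polytope_facets (n k : ℕ) (hk1 : 1 ≤ k)
    (hk2 : k ≤ n - 1) (a b : ℝ) (hab : b < a) :
    IsCompact (gcPolytope k (n - k) a b) ∧
    Convex ℝ (gcPolytope k (n - k) a b) ∧
    (interior (gcPolytope k (n - k) a b)).Nonempty ∧
    faceDim (gcPolytope k (n - k) a b) = k * (n - k) ∧
    -- the polytope is cut out by the listed inequalities, with inward normals:
    gcPolytope k (n - k) a b =
      {x | ∀ q : GCIneq k (n - k),
        (gcNormal k (n - k) (by omega) (by omega) a b q).2 ≤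
          gcDot (gcNormal k (n - k) (by omega) (by omega) a b q).1 x} ∧
    -- each of the listed inequalities defines a facet:
    (∀ q : GCIneq k (n - k),
      IsFaceOf (gcPolytope k (n - k) a b)
        {x ∈ gcPolytope k (n - k) a b |
          gcDot (gcNormal k (n - k) (by omega) (by omega) a b q).1 x =
            (gcNormal k (n - k) (by omega) (by omega) a b q).2} ∧
      faceDim {x ∈ gcPolytope k (n - k) a b |
          gcDot (gcNormal k (n - k) (by omega) (by omega) a b q).1 x =
            (gcNormal k (n - k) (by omega) (by omega) a b q).2} = k * (n - k) - 1) ∧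
    -- distinct listed inequalities define distinct facets ("exactly one" each):
    Function.Injective (fun q : GCIneq k (n - k) =>
      {x ∈ gcPolytope k (n - k) a b |
        gcDot (gcNormal k (n - k) (by omega) (by omega) a b q).1 x =
          (gcNormal k (n - k) (by omega) (by omega) a b q).2}) ∧
    -- every facet arises from one of the listed inequalities:
    (∀ F : Set (GCSpace k (n - k)),
      IsFaceOf (gcPolytope k (n - k) a b) F → faceDim F = k * (n - k) - 1 →
      ∃ q : GCIneq k (n - k),
        F = {x ∈ gcPolytope k (n - k) a b |
          gcDot (gcNormal k (n - k) (by omega) (by omega) a b q).1 x =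
            (gcNormal k (n - k) (by omega) (by omega) a b q).2}) ∧
    -- hence the number of facets:
    {F : Set (GCSpace k (n - k)) |
        IsFaceOf (gcPolytope k (n - k) a b) F ∧ faceDim F = k * (n - k) - 1}.ncard =
      (k - 1) * (n - k) + k * (n - k - 1) + 2 := by
  have hk : 0 < k := hk1
  have hm : 0 < n - k := by omega
  have hfacet := exists_isFacetPoint_gcForm hk hm hab
  obtain ⟨x, hx⟩ := exists_forall_lt_of_facetPoints hfacet
  have hdim : finrank ℝ (GCSpace k (n - k)) = k * (n - k) := by simp
  have hfacets := setOf_facets_eq_range hfacet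
  rw [hdim] at hfacets
  refine ⟨isCompact_gcPolytope hk hm a b, ?_⟩
  rw [gcPolytope_eq_polyhedron hk hm a b]
  refine ⟨convex_polyhedron, ⟨x, mem_interior_polyhedron hx⟩, ?_, rfl,
    fun q => (hfacets.symm.subset ⟨q, rfl⟩ :), ineqFace_injective hfacet,
    fun F hF hF' => (hfacets.subset ⟨hF, hF'⟩).imp fun _ => Eq.symm, ?_⟩
  · rw [faceDim, vectorSpan_polyhedron hx, finrank_top, hdim]
  · refine (congrArg Set.ncard hfacets).trans ?_
    rw [Set.ncard_range_of_injective (ineqFace_injective hfacet)]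
    simp only [Nat.card_eq_fintype_card, Fintype.card_sum, Fintype.card_prod, Fintype.card_fin,
      Fintype.card_unique]
    ring

end
end

section
/- Fix integers n ≥ 2 and 1 ≤ m ≤ n−1, and suppose given complex numbers p_S for every m-element subset S ⊆ {1,…,n} that satisfy the Plücker relations. Let ζ = e^{2πi/n}. Then the following two families also satisfy the Plücker relations: (i) p'_S = ζ^{s₁+…+s_m}·p_S, where S = {s₁,…,s_m}; (ii) p''_S = p_{S*}, where S* = {n+1−s : s ∈ S}. (This is the statement that the image of the dual Plücker embedding of Gr(n−k,n), with m = n−k, is invariant under the action of the dihedral group D_n induced by the dihedral projective representation, whose generator r scales the Plücker coordinate of a Young diagram d by ζ^{|d|} and whose generator s permutes Plücker coordinates by Poincaré duality of Young diagrams.) -/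
/-! Both families act on the extended coordinates of tuples in the form
`p'(v) = c · ∏ᵢ w(vᵢ) · p(g ∘ v)`: the rotation with `g = id`, `w(s) = ζ^(s+1)`, `c = 1`, and the
reflection with `g = rev`, `w = 1` and `c` the sign of the reversal of `Fin m`, because an
order-reversing relabelling composes the sorting permutation with that reversal. A Plücker exchange
only permutes the `2m` entries of the pair `(u, v)` and commutes with relabelling by `g`, so both
sides of every relation are multiplied by the same factor `c² ∏ᵢ w(uᵢ) ∏ᵢ w(vᵢ)`. -/

noncomputable section

/-- Extension of a family of Plücker coordinates, indexed by subsets of `Fin n`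
(`i : Fin n` representing the element `i+1` of `{1,…,n}`), to arbitrary `m`-tuples:
zero on tuples with repeated entries, and otherwise the coordinate of the underlying
set multiplied by the sign of the permutation sorting the tuple. -/
def pluckerExt (m n : ℕ) (p : Finset (Fin n) → ℂ) (v : Fin m → Fin n) : ℂ :=
  if Function.Injective v then
    ((Equiv.Perm.sign (Tuple.sort v) : ℤ) : ℂ) * p (Finset.univ.image v)
  else 0

/-- Exchange the entries of `u` in positions `L` (in increasing order) with the last
`t` entries of `v`, in order. -/
def pluckerExchange (m n t : ℕ) (ht : t ≤ m) (u v : Fin m → Fin n)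
    (L : Finset (Fin m)) (hL : L.card = t) : (Fin m → Fin n) × (Fin m → Fin n) :=
  (fun a => if h : a ∈ L then
      v ⟨m - t + ((L.orderIsoOfFin hL).symm ⟨a, h⟩ : Fin t), by
        have := ((L.orderIsoOfFin hL).symm ⟨a, h⟩).2; omega⟩
    else u a,
   fun b => if h : m - t ≤ (b : ℕ) then
      u (L.orderEmbOfFin hL ⟨(b : ℕ) - (m - t), by have := b.2; omega⟩)
    else v b)

/-- The family `p` satisfies the Plücker relations. -/
def SatisfiesPlucker (m n : ℕ) (p : Finset (Fin n) → ℂ) : Prop :=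
  ∀ (t : ℕ) (ht1 : 1 ≤ t) (ht2 : t ≤ m) (u v : Fin m → Fin n),
    pluckerExt m n p u * pluckerExt m n p v =
      ∑ L : Finset (Fin m), if hL : L.card = t then
        pluckerExt m n p (pluckerExchange m n t ht2 u v L hL).1 *
          pluckerExt m n p (pluckerExchange m n t ht2 u v L hL).2
      else 0

def pluckerExchangeIndex (m t : ℕ) (ht : t ≤ m) (L : Finset (Fin m)) (hL : L.card = t) :
    Fin m ⊕ Fin m → Fin m ⊕ Fin m
  | .inl a => if h : a ∈ L then
      .inr ⟨m - t + ((L.orderIsoOfFin hL).symm ⟨a, h⟩ : Fin t), by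
        have := ((L.orderIsoOfFin hL).symm ⟨a, h⟩).2; omega⟩
    else .inl a
  | .inr b => if h : m - t ≤ (b : ℕ) then
      .inl (L.orderEmbOfFin hL ⟨(b : ℕ) - (m - t), by have := b.2; omega⟩)
    else .inr b

section Exchange

variable {m t : ℕ} (ht : t ≤ m) (L : Finset (Fin m)) (hL : L.card = t)

theorem pluckerExchangeIndex_involutive :
    Function.Involutive (pluckerExchangeIndex m t ht L hL) := by
  rintro (a | b)
  · by_cases h : a ∈ L
    · simp only [pluckerExchangeIndex, dif_pos h, Nat.le_add_right, dif_pos,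
        Nat.add_sub_cancel_left, Fin.eta, ← Finset.coe_orderIsoOfFin_apply,
        OrderIso.apply_symm_apply]
    · simp only [pluckerExchangeIndex, dif_neg h]
  · by_cases h : m - t ≤ (b : ℕ)
    · have hb : m - t + ((b : ℕ) - (m - t)) = b := by omega
      simp only [pluckerExchangeIndex, dif_pos h, ← Finset.coe_orderIsoOfFin_apply,
        Finset.coe_mem, dif_pos, Subtype.coe_eta, OrderIso.symm_apply_apply, hb, Fin.eta]
    · simp only [pluckerExchangeIndex, dif_neg h]

theorem sumElim_pluckerExchange {n : ℕ} (u v : Fin m → Fin n) :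
    Sum.elim (pluckerExchange m n t ht u v L hL).1 (pluckerExchange m n t ht u v L hL).2 =
      Sum.elim u v ∘ pluckerExchangeIndex m t ht L hL := by
  funext x
  rcases x with a | b <;>
    simp only [pluckerExchange, pluckerExchangeIndex, Sum.elim_inl, Sum.elim_inr,
      Function.comp_apply] <;> split_ifs <;> rfl

theorem prod_pluckerExchange {n : ℕ} {M : Type*} [CommMonoid M] (w : Fin n → M)
    (u v : Fin m → Fin n) :
    (∏ i, w ((pluckerExchange m n t ht u v L hL).1 i)) *
        ∏ i, w ((pluckerExchange m n t ht u v L hL).2 i) =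
      (∏ i, w (u i)) * ∏ i, w (v i) := by
  have key := Equiv.prod_comp (pluckerExchangeIndex_involutive ht L hL).toPerm
    (fun x => w (Sum.elim u v x))
  have hx (x) : Sum.elim u v (pluckerExchangeIndex m t ht L hL x) =
      Sum.elim (pluckerExchange m n t ht u v L hL).1 (pluckerExchange m n t ht u v L hL).2 x :=
    congrFun (sumElim_pluckerExchange ht L hL u v).symm x
  simpa only [Fintype.prod_sum_type, Function.Involutive.coe_toPerm, Function.comp_apply, hx,
    Sum.elim_inl, Sum.elim_inr] using key

theorem pluckerExchange_comp {n n' : ℕ} (g : Fin n → Fin n') (u v : Fin m → Fin n) :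
    pluckerExchange m n' t ht (g ∘ u) (g ∘ v) L hL =
      (g ∘ (pluckerExchange m n t ht u v L hL).1, g ∘ (pluckerExchange m n t ht u v L hL).2) := by
  unfold pluckerExchange
  refine Prod.ext ?_ ?_ <;> funext a <;> dsimp only [Function.comp] <;> split <;> rfl

end Exchange

theorem SatisfiesPlucker.of_pluckerExt_eq {m n n' : ℕ} {p : Finset (Fin n') → ℂ}
    {q : Finset (Fin n) → ℂ} (hp : SatisfiesPlucker m n' p) (g : Fin n → Fin n') (c : ℂ)
    (w : Fin n → ℂ)
    (hq : ∀ v, pluckerExt m n q v = c * (∏ i, w (v i)) * pluckerExt m n' p (g ∘ v)) :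
    SatisfiesPlucker m n q := by
  intro t ht1 ht2 u v
  have hterm (L : Finset (Fin m)) (hL : L.card = t) :
      pluckerExt m n q (pluckerExchange m n t ht2 u v L hL).1 *
          pluckerExt m n q (pluckerExchange m n t ht2 u v L hL).2 =
        c * c * ((∏ i, w (u i)) * ∏ i, w (v i)) *
          (pluckerExt m n' p (pluckerExchange m n' t ht2 (g ∘ u) (g ∘ v) L hL).1 *
            pluckerExt m n' p (pluckerExchange m n' t ht2 (g ∘ u) (g ∘ v) L hL).2) := by
    rw [hq, hq, ← prod_pluckerExchange ht2 L hL w, pluckerExchange_comp]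
    ring
  calc pluckerExt m n q u * pluckerExt m n q v
      = c * c * ((∏ i, w (u i)) * ∏ i, w (v i)) *
          (pluckerExt m n' p (g ∘ u) * pluckerExt m n' p (g ∘ v)) := by
        rw [hq u, hq v]
        ring
    _ = _ := by
      rw [hp t ht1 ht2 (g ∘ u) (g ∘ v), Finset.mul_sum]
      refine Finset.sum_congr rfl fun L _ => ?_
      rw [mul_dite, mul_zero]
      exact dite_congr rfl (fun hL => (hterm L hL).symm) fun _ => rfl

theorem pluckerExt_prod_mul {m n : ℕ} (w : Fin n → ℂ) (p : Finset (Fin n) → ℂ)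
    (v : Fin m → Fin n) :
    pluckerExt m n (fun S => (∏ s ∈ S, w s) * p S) v = (∏ i, w (v i)) * pluckerExt m n p v := by
  unfold pluckerExt
  split_ifs with hv
  · dsimp only
    rw [Finset.prod_image fun _ _ _ _ h => hv h]
    ring
  · rw [mul_zero]

theorem Tuple.sort_comp_of_strictAnti {m : ℕ} {α β : Type*} [LinearOrder α] [LinearOrder β]
    {f : Fin m → α} (hf : Function.Injective f) {g : α → β} (hg : StrictAnti g) :
    Tuple.sort (g ∘ f) = Tuple.sort f * Fin.revPerm := by
  symm
  refine Tuple.eq_sort_iff.2 ⟨fun i j hij => ?_, fun i j hij heq => ?_⟩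
  · exact hg.antitone ((Tuple.monotone_sort f) (Fin.rev_anti hij))
  · exact absurd (Fin.rev_injective ((Tuple.sort f).injective (hf (hg.injective heq))))
      hij.ne

theorem pluckerExt_image_of_strictAnti {m n n' : ℕ} {g : Fin n → Fin n'} (hg : StrictAnti g)
    (p : Finset (Fin n') → ℂ) (v : Fin m → Fin n) :
    pluckerExt m n (fun S => p (S.image g)) v =
      ((Equiv.Perm.sign (Fin.revPerm : Equiv.Perm (Fin m)) : ℤ) : ℂ) *
        pluckerExt m n' p (g ∘ v) := by
  unfold pluckerExt
  by_cases hv : Function.Injective v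
  · rw [if_pos hv, if_pos (hg.injective.comp hv), Tuple.sort_comp_of_strictAnti hv hg,
      ← Finset.image_image]
    rcases Int.units_eq_one_or (Equiv.Perm.sign (Fin.revPerm : Equiv.Perm (Fin m))) with h | h <;>
      simp [h]
  · rw [if_neg hv, if_neg (fun h => hv h.of_comp), mul_zero]

theorem plucker_relations_dihedral_invariant_general (m n : ℕ) (p : Finset (Fin n) → ℂ)
    (hp : SatisfiesPlucker m n p) :
    SatisfiesPlucker m n (fun S =>
      Complex.exp (2 * Real.pi * Complex.I / n) ^ (∑ s ∈ S, ((s : ℕ) + 1)) * p S) ∧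
    SatisfiesPlucker m n (fun S => p (S.image Fin.rev)) := by
  set ζ := Complex.exp (2 * Real.pi * Complex.I / n)
  refine ⟨hp.of_pluckerExt_eq id 1 (fun s => ζ ^ ((s : ℕ) + 1)) fun v => ?_,
    hp.of_pluckerExt_eq Fin.rev (Equiv.Perm.sign (Fin.revPerm : Equiv.Perm (Fin m)) : ℤ)
      (fun _ => 1) fun v => ?_⟩
  · simp only [← Finset.prod_pow_eq_pow_sum, pluckerExt_prod_mul, one_mul, Function.id_comp]
  · rw [pluckerExt_image_of_strictAnti Fin.rev_strictAnti, Finset.prod_const_one, mul_one]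

/-- If the Plücker coordinates `p_S` satisfy the Plücker relations, then so do the
families `p'_S = ζ^{s₁+…+s_m}·p_S` (with `ζ = e^{2πi/n}`) and `p''_S = p_{S*}` where
`S* = {n+1−s : s ∈ S}`: the image of the dual Plücker embedding of the Grassmannian is
invariant under the dihedral projective representation. -/
theorem plucker_relations_dihedral_invariant (m n : ℕ) (hn : 2 ≤ n)
    (hm1 : 1 ≤ m) (hm2 : m ≤ n - 1) (p : Finset (Fin n) → ℂ)
    (hp : SatisfiesPlucker m n p) :
    SatisfiesPlucker m n (fun S =>
      Complex.exp (2 * Real.pi * Complex.I / n) ^ (∑ s ∈ S, ((s : ℕ) + 1)) * p S) ∧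
    SatisfiesPlucker m n (fun S => p (S.image Fin.rev)) :=
  plucker_relations_dihedral_invariant_general m n p hp

end
end

section
/- Fix integers n ≥ 2 and 1 ≤ k ≤ n−1, let ζ = e^{2πi/n}, and let W be the Laurent polynomial in the variables x_{i,j} (1 ≤ i ≤ k, 1 ≤ j ≤ n−k) given by W(x) = Σ_{i=1}^{k−1} Σ_{j=1}^{n−k} x_{i,j}/x_{i+1,j} + Σ_{i=1}^{k} Σ_{j=1}^{n−k−1} x_{i,j+1}/x_{i,j} + 1/x_{1,n−k} + x_{k,1}. Define ρ : (ℂ^×)^{k(n−k)} → (ℂ^×)^{k(n−k)} by (ρ(x))_{i,j} = ζ^{k−i+j}·x_{i,j}. Then W(ρ(x)) = ζ·W(x) for every x ∈ (ℂ^×)^{k(n−k)}. -/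
/-- The Maslov 2 disk potential of the monotone Gelfand–Cetlin torus in `Gr(k,n)`
(`m = n−k`), as a function of the holonomy coordinates `x (i,j)`, `1 ≤ i ≤ k`,
`1 ≤ j ≤ m`. -/
noncomputable def gcPotential (k m : ℕ) (x : ℕ × ℕ → ℂ) : ℂ :=
  (∑ i ∈ Finset.Icc 1 (k - 1), ∑ j ∈ Finset.Icc 1 m, x (i, j) / x (i + 1, j))
    + (∑ i ∈ Finset.Icc 1 k, ∑ j ∈ Finset.Icc 1 (m - 1), x (i, j + 1) / x (i, j))
    + 1 / x (1, m) + x (k, 1)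

/-- The rotation `ρ` on the space of local systems: `(ρ(x))_{i,j} = ζ^{k−i+j}·x_{i,j}`
with `ζ = e^{2πi/n}`. -/
noncomputable def gcRho (n k : ℕ) (x : ℕ × ℕ → ℂ) : ℕ × ℕ → ℂ := fun q =>
  Complex.exp (2 * Real.pi * Complex.I / n) ^ (k - q.1 + q.2) * x q

/-! Every monomial of `W` is a ratio of two coordinates whose weights `k - i + j` differ by one,
except `1 / x (1, m)`, whose weight is `1 - (k + m)`, i.e. one modulo `k + m`. Hence rescaling
each coordinate by `t ^ (k - i + j)` multiplies `W` by `t` as soon as `t ^ (k + m) = 1`. -/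

lemma pow_succ_mul_div_pow_mul {K : Type*} [Field K] (t : K) (e : ℕ) (a b : K) :
    t ^ (e + 1) * a / (t ^ e * b) = t * (a / b) := by
  rcases eq_or_ne t 0 with rfl | ht
  · simp
  · rw [pow_succ, mul_assoc, mul_div_mul_left _ _ (pow_ne_zero e ht), mul_div_assoc]

theorem gcPotential_weight_rescale (k m : ℕ) (hk : 1 ≤ k) {t : ℂ} (ht : t ^ (k + m) = 1)
    (x : ℕ × ℕ → ℂ) :
    gcPotential k m (fun q => t ^ (k - q.1 + q.2) * x q) = t * gcPotential k m x := by
  simp only [gcPotential, mul_add, Finset.mul_sum]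
  congr 1
  congr 1
  congr 1
  · refine Finset.sum_congr rfl fun i hi => Finset.sum_congr rfl fun j _ => ?_
    have hweight : k - i + j = k - (i + 1) + j + 1 := by
      simp only [Finset.mem_Icc] at hi
      omega
    rw [hweight, pow_succ_mul_div_pow_mul]
  · refine Finset.sum_congr rfl fun i _ => Finset.sum_congr rfl fun j _ => ?_
    rw [show k - i + (j + 1) = k - i + j + 1 by omega, pow_succ_mul_div_pow_mul]
  · have hweight : k - 1 + m + 1 = k + m := by omega
    rw [← pow_succ_mul_div_pow_mul, hweight, ht, one_mul]
  · simp

theorem gcPotential_rho_equivariant_general (n k : ℕ) (hk1 : 1 ≤ k)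
    (hk2 : k ≤ n - 1) (x : ℕ × ℕ → ℂ) :
    gcPotential k (n - k) (gcRho n k x) =
      Complex.exp (2 * Real.pi * Complex.I / n) * gcPotential k (n - k) x := by
  have hζ : Complex.exp (2 * Real.pi * Complex.I / n) ^ (k + (n - k)) = 1 := by
    rw [Nat.add_sub_cancel' (by omega)]
    exact (Complex.isPrimitiveRoot_exp n (by omega)).pow_eq_one
  exact gcPotential_weight_rescale k (n - k) hk1 hζ x

/-- The disk potential of the Gelfand–Cetlin torus is equivariant for the rotation
`ρ`: `W(ρ(x)) = ζ·W(x)` for every `x ∈ (ℂ^×)^{k(n−k)}`. -/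
theorem gcPotential_rho_equivariant (n k : ℕ) (hn : 2 ≤ n) (hk1 : 1 ≤ k)
    (hk2 : k ≤ n - 1) (x : ℕ × ℕ → ℂ)
    (hx : ∀ i j : ℕ, 1 ≤ i → i ≤ k → 1 ≤ j → j ≤ n - k → x (i, j) ≠ 0) :
    gcPotential k (n - k) (gcRho n k x) =
      Complex.exp (2 * Real.pi * Complex.I / n) * gcPotential k (n - k) x :=
  gcPotential_rho_equivariant_general n k hk1 hk2 x
end
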